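/- arXiv:2309.09135 — 5 statements merged into one kernel-verified Lean document; each statement's English description precedes it below -/
import Mathlib

section
/- Let (X,d) be a proper, geodesic, δ-hyperbolic metric space and let α:[0,∞)→X be a geodesic ray. Define α':[0,∞)→X by α'(t)=α(t+6δ). Then the funnel F(α') is contained in the horoball H(α). -/
set_option autoImplicit false

universe u v

open Set Metric

/-- A map `γ : ℝ → X` is a (unit–speed) geodesic on the interval `[s, t]`. -/
def IsGeodesicOn {X : Type*} [MetricSpace X] (γ : ℝ → X) (s t : ℝ) : Prop :=
  ∀ u ∈ Set.Icc s t, ∀ v ∈ Set.Icc s t, dist (γ u) (γ v) = |u - v|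

/-- A geodesic ray defined on the domain `[a, ∞)`. -/
def IsGeodesicRay {X : Type*} [MetricSpace X] (a : ℝ) (α : ℝ → X) : Prop :=
  ∀ u ∈ Set.Ici a, ∀ v ∈ Set.Ici a, dist (α u) (α v) = |u - v|

/-- A bi-infinite geodesic line. -/
def IsGeodesicLine {X : Type*} [MetricSpace X] (γ : ℝ → X) : Prop :=
  ∀ u v : ℝ, dist (γ u) (γ v) = |u - v|

/-- `X` is a geodesic metric space: any two points are joined by a geodesic segment. -/
def IsGeodesicSpace (X : Type*) [MetricSpace X] : Prop :=
  ∀ x y : X, ∃ γ : ℝ → X, IsGeodesicOn γ 0 (dist x y) ∧ γ 0 = x ∧ γ (dist x y) = y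

/-- A `(K, C)`-quasi-geodesic defined on the interval `[s, t]`. -/
def IsQuasiGeodesicOn {X : Type*} [MetricSpace X] (K C : ℝ) (φ : ℝ → X) (s t : ℝ) : Prop :=
  ∀ u ∈ Set.Icc s t, ∀ v ∈ Set.Icc s t,
    (1 / K) * |u - v| - C ≤ dist (φ u) (φ v) ∧ dist (φ u) (φ v) ≤ K * |u - v| + C

/-- A Morse gauge: a function `N : [1,∞) × [0,∞) → [0,∞)`. -/
abbrev MorseGauge : Type :=
  {N : ℝ → ℝ → ℝ // ∀ K C : ℝ, 1 ≤ K → 0 ≤ C → 0 ≤ N K C}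

/-- A subset `S ⊆ X` (e.g. the image of a (quasi-)geodesic) is `N`-Morse if every
`(K, C)`-quasi-geodesic with endpoints on `S` stays in the `N (K, C)`-neighborhood of `S`. -/
def IsMorseSet {X : Type*} [MetricSpace X] (N : MorseGauge) (S : Set X) : Prop :=
  ∀ K C : ℝ, 1 ≤ K → 0 ≤ C → ∀ (φ : ℝ → X) (s t : ℝ), s ≤ t →
    IsQuasiGeodesicOn K C φ s t → φ s ∈ S → φ t ∈ S →
    ∀ u ∈ Set.Icc s t, ∃ p ∈ S, dist (φ u) p ≤ N.1 K C

/-- The constant `δ_N = max {4N(1, 2N(5,0)) + 2N(5,0), 8N(3,0)} + N(5,0)`. -/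
noncomputable def deltaGauge (N : MorseGauge) : ℝ :=
  max (4 * N.1 1 (2 * N.1 5 0) + 2 * N.1 5 0) (8 * N.1 3 0) + N.1 5 0

/-- Two rays `α, β` `K`-asymptotically fellow-travel: `α ∼_K β`. -/
def FellowTravel {X : Type*} [MetricSpace X] (K : ℝ) (α β : ℝ → X) : Prop :=
  ∃ T : ℝ, ∀ t ≥ T, dist (α t) (β t) ≤ K

/-- Two subsets of `X` are at finite Hausdorff distance from each other. -/
def FinHausdorff {X : Type*} [MetricSpace X] (S T : Set X) : Prop :=
  ∃ C : ℝ, (∀ s ∈ S, ∃ t ∈ T, dist s t ≤ C) ∧ (∀ t ∈ T, ∃ s ∈ S, dist s t ≤ C)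

/-- The closest point projection `π_S (x)` of `x` to a subset `S`. -/
noncomputable def nearestPoints {X : Type*} [MetricSpace X] (S : Set X) (x : X) : Set X :=
  {s ∈ S | dist x s = Metric.infDist x S}

/-- The Morse stratum `X_o^N`: points `x` joined to `o` by an `N`-Morse geodesic. -/
def InMorseStratum {X : Type*} [MetricSpace X] (o : X) (N : MorseGauge) (x : X) : Prop :=
  ∃ γ : ℝ → X, IsGeodesicOn γ 0 (dist o x) ∧ γ 0 = o ∧ γ (dist o x) = x ∧
    IsMorseSet N (γ '' Set.Icc 0 (dist o x))

/-- The space of `N`-Morse geodesic rays emanating from `o`, with the topology of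
pointwise (equivalently, since rays are `1`-Lipschitz, uniform-on-compact) convergence. -/
abbrev MorseRaysFrom {X : Type*} [MetricSpace X] (o : X) (N : MorseGauge) : Type _ :=
  {α : ℝ → X // IsGeodesicRay 0 α ∧ α 0 = o ∧ IsMorseSet N (α '' Set.Ici 0)}

/-- Two Morse rays from `o` are identified when they are at finite Hausdorff distance. -/
def AsympRel {X : Type*} [MetricSpace X] (o : X)
    (p q : Σ N : MorseGauge, MorseRaysFrom o N) : Prop :=
  FinHausdorff (p.2.1 '' Set.Ici 0) (q.2.1 '' Set.Ici 0)

/-- The Morse boundary `∂X_o`: the direct limit over all Morse gauges `N` of the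
boundaries `∂X_o^N` of the strata, realized as the quotient of the disjoint union of
the ray spaces; it carries the direct limit (quotient) topology. -/
abbrev MorseBoundary {X : Type*} [MetricSpace X] (o : X) : Type _ :=
  Quot (AsympRel o)

/-- The boundary point `α(∞) ∈ ∂X_o` determined by a Morse geodesic ray from `o`. -/
def boundaryPoint {X : Type*} [MetricSpace X] (o : X) (N : MorseGauge)
    (α : MorseRaysFrom o N) : MorseBoundary o :=
  Quot.mk _ ⟨N, α⟩

/-- Membership `x ∈ ∂X_o^N` for a point of the Morse boundary. -/
def InStratumBoundary {X : Type*} [MetricSpace X] (o : X) (N : MorseGauge)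
    (x : MorseBoundary o) : Prop :=
  ∃ α : MorseRaysFrom o N, boundaryPoint o N α = x

/-- A geodesic ray `α : [a,∞) → X` converges to (represents) the point `x ∈ ∂X_o`,
written `α(∞) = x`: it is at finite Hausdorff distance from a Morse ray from `o`
representing `x`. -/
def RayConvergesTo {X : Type*} [MetricSpace X] (o : X) (a : ℝ) (α : ℝ → X)
    (x : MorseBoundary o) : Prop :=
  ∃ (N : MorseGauge) (β : MorseRaysFrom o N), boundaryPoint o N β = x ∧
    FinHausdorff (α '' Set.Ici a) (β.1 '' Set.Ici 0)

/-- The limit set `ΛA ⊆ ∂X_o` of `A ⊆ X`: points `x` such that, for some Morse gauge `N`,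
there is a sequence in `A ∩ X_o^N` whose geodesics from `o` converge uniformly on compact
sets to a geodesic ray representing `x`. -/
def limitSet {X : Type*} [MetricSpace X] (o : X) (A : Set X) : Set (MorseBoundary o) :=
  {x | ∃ (N : MorseGauge) (p : ℕ → X) (γ : ℕ → ℝ → X) (α : ℝ → X),
      (∀ k, p k ∈ A ∧ InMorseStratum o N (p k)) ∧
      (∀ k, IsGeodesicOn (γ k) 0 (dist o (p k)) ∧ γ k 0 = o ∧ γ k (dist o (p k)) = p k) ∧
      IsGeodesicRay 0 α ∧ α 0 = o ∧
      (∀ R > (0:ℝ), ∀ ε > (0:ℝ), ∃ K : ℕ, ∀ k ≥ K, R ≤ dist o (p k) ∧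
        ∀ t ∈ Set.Icc (0:ℝ) R, dist (γ k t) (α t) ≤ ε) ∧
      RayConvergesTo o 0 α x}

/-- The `N`-Morse horoball based at `o` around the geodesic ray `α : [a,∞) → X`,
where `M` is the Morse gauge of `α` (used via the constant `δ_M`). -/
def morseHoroball {X : Type*} [MetricSpace X] (o : X) (N M : MorseGauge) (a : ℝ)
    (α : ℝ → X) : Set X :=
  {x | InMorseStratum o N x ∧ ∃ b ≥ a, ∃ β : ℝ → X,
    IsGeodesicRay b β ∧ β b = x ∧ FellowTravel (deltaGauge M) α β}

/-- The `N`-Morse funnel based at `o` around the geodesic ray `α : [a,∞) → X`. -/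
noncomputable def morseFunnel {X : Type*} [MetricSpace X] (o : X) (N : MorseGauge) (a : ℝ)
    (α : ℝ → X) : Set X :=
  {x | InMorseStratum o N x ∧
    Metric.infDist x (α '' Set.Ici a) ≤
      Metric.infDist (α a) (nearestPoints (α '' Set.Ici a) x)}

/-- `x ∈ ∂X_o` is a Morse conical limit point of `A ⊆ X`: there is `K > 0` such that the
`K`-neighborhood of every Morse geodesic ray representing `x` meets `A`. -/
def IsMorseConicalLimitPoint {X : Type*} [MetricSpace X] (o : X) (A : Set X)
    (x : MorseBoundary o) : Prop :=
  ∃ K > (0:ℝ), ∀ (a : ℝ) (α : ℝ → X), IsGeodesicRay a α →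
    (∃ M : MorseGauge, IsMorseSet M (α '' Set.Ici a)) → RayConvergesTo o a α x →
    ∃ y ∈ A, Metric.infDist y (α '' Set.Ici a) ≤ K

/-- `x ∈ ∂X_o` is a Morse horospherical limit point of `A ⊆ X`: for every Morse geodesic
ray `α` representing `x` (with Morse gauge `M`), some Morse horoball about `α` meets `A`. -/
def IsMorseHoroLimitPoint {X : Type*} [MetricSpace X] (o : X) (A : Set X)
    (x : MorseBoundary o) : Prop :=
  ∀ (a : ℝ) (α : ℝ → X) (M : MorseGauge), IsGeodesicRay a α →
    IsMorseSet M (α '' Set.Ici a) → RayConvergesTo o a α x →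
    ∃ N : MorseGauge, (morseHoroball o N M a α ∩ A).Nonempty

/-- `x ∈ ∂X_o` is a Morse funnelled limit point of `A ⊆ X`: for every Morse geodesic ray
`α` representing `x`, some Morse funnel about `α` meets `A`. -/
def IsMorseFunnelLimitPoint {X : Type*} [MetricSpace X] (o : X) (A : Set X)
    (x : MorseBoundary o) : Prop :=
  ∀ (a : ℝ) (α : ℝ → X), IsGeodesicRay a α →
    (∃ M : MorseGauge, IsMorseSet M (α '' Set.Ici a)) → RayConvergesTo o a α x →
    ∃ N : MorseGauge, (morseFunnel o N a α ∩ A).Nonempty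

/-- The weak convex hull `WCH(B)` of a set `B ⊆ ∂X_o` of boundary points: the union of all
bi-infinite geodesics of `X` both of whose endpoints at infinity lie in `B`. -/
def weakConvexHull {X : Type*} [MetricSpace X] (o : X) (B : Set (MorseBoundary o)) :
    Set X :=
  {y | ∃ γ : ℝ → X, IsGeodesicLine γ ∧
    (∃ x₁ ∈ B, RayConvergesTo o 0 γ x₁) ∧
    (∃ x₂ ∈ B, RayConvergesTo o 0 (fun t => γ (-t)) x₂) ∧
    ∃ t : ℝ, γ t = y}

/-- The action of `H` on `X` is by isometries. -/
def IsIsometricAction (H X : Type*) [Group H] [MulAction H X] [MetricSpace X] : Prop :=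
  ∀ (h : H) (x y : X), dist (h • x) (h • y) = dist x y

/-- The action of `H` on `X` is (metrically) proper. -/
def IsProperAction (H : Type*) {X : Type*} [Group H] [MulAction H X] [MetricSpace X]
    (o : X) : Prop :=
  ∀ R : ℝ, {h : H | dist (h • o) o ≤ R}.Finite

/-- The orbit `H·o` of the basepoint. -/
def orbitSet (H : Type*) {X : Type*} [Group H] [MulAction H X] (o : X) : Set X :=
  Set.range fun h : H => h • o

/-- The action of `H` on the subset `Y ⊆ X` is cobounded: `Y` lies in a bounded
neighborhood of some `H`-orbit in `Y`. -/
def IsCoboundedActionOn (H : Type*) {X : Type*} [Group H] [MulAction H X] [MetricSpace X]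
    (Y : Set X) : Prop :=
  Y = ∅ ∨ ∃ p ∈ Y, ∃ R : ℝ, ∀ y ∈ Y, ∃ h : H, dist y (h • p) ≤ R

/-- The word metric on `H` associated to a generating set `S`. -/
noncomputable def wordDist {H : Type*} [Group H] (S : Set H) (g h : H) : ℕ :=
  sInf {n : ℕ | ∃ w : List H, (∀ u ∈ w, u ∈ S ∨ u⁻¹ ∈ S) ∧ w.length = n ∧ w.prod = g⁻¹ * h}

/-- The orbit map `h ↦ h • o` is a stable embedding: it is a quasi-isometric embedding of
`H` (with a word metric coming from a finite generating set) into `X`, and there is a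
Morse gauge `N` such that any two points of the orbit are joined by an `N`-Morse
quasi-geodesic of `X`. -/
def OrbitMapStable (H : Type*) {X : Type*} [Group H] [MulAction H X] [MetricSpace X]
    (o : X) : Prop :=
  ∃ S : Finset H, Subgroup.closure (S : Set H) = ⊤ ∧
    (∃ lam : ℝ, 1 ≤ lam ∧ ∀ g h : H,
      (wordDist (S : Set H) g h : ℝ) / lam - lam ≤ dist (g • o) (h • o) ∧
      dist (g • o) (h • o) ≤ lam * (wordDist (S : Set H) g h : ℝ) + lam) ∧
    ∃ N : MorseGauge, ∀ g h : H, ∃ (K C s t : ℝ) (φ : ℝ → X),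
      1 ≤ K ∧ 0 ≤ C ∧ s ≤ t ∧ IsQuasiGeodesicOn K C φ s t ∧ φ s = g • o ∧ φ t = h • o ∧
      IsMorseSet N (φ '' Set.Icc s t)

/-- `H` acts boundary convex cocompactly on `X` (with respect to the basepoint `o`):
the action is proper, the limit set `ΛH` is nonempty and compact, and the action of `H`
on the weak convex hull of `ΛH` is cobounded. -/
def BoundaryConvexCocompact (H : Type*) {X : Type*} [Group H] [MulAction H X]
    [MetricSpace X] (o : X) : Prop :=
  IsProperAction H o ∧ (limitSet o (orbitSet H o)).Nonempty ∧
    IsCompact (limitSet o (orbitSet H o)) ∧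
    IsCoboundedActionOn H (weakConvexHull o (limitSet o (orbitSet H o)))

/-- `X` is `δ`-hyperbolic (four-point condition). -/
def IsGromovHyperbolic (X : Type*) [MetricSpace X] (δ : ℝ) : Prop :=
  ∀ x y z w : X, dist x y + dist z w ≤ max (dist x z + dist y w) (dist x w + dist y z) + 2 * δ

/-- The horoball `H(α)` about a geodesic ray `α : [a,∞) → X` in a `δ`-hyperbolic space:
the union of the images of all geodesic rays `β : [b,∞) → X` with `β ∼_{6δ} α` and
`b ≥ a`. -/
def horoball {X : Type*} [MetricSpace X] (δ a : ℝ) (α : ℝ → X) : Set X :=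
  {x | ∃ b ≥ a, ∃ β : ℝ → X, IsGeodesicRay b β ∧ FellowTravel (6 * δ) α β ∧
    ∃ t ≥ b, β t = x}

/-- The funnel `F(α)` about a geodesic ray `α : [a,∞) → X`:
`F(α) = {x : d(x, α) ≤ d(π_α(x), α(a))}`. -/
noncomputable def funnel {X : Type*} [MetricSpace X] (a : ℝ) (α : ℝ → X) : Set X :=
  {x | Metric.infDist x (α '' Set.Ici a) ≤
    Metric.infDist (α a) (nearestPoints (α '' Set.Ici a) x)}

open Filter Topology

set_option maxHeartbeats 1000000

/- ### auxiliary lemmas -/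

lemma min_lip (a b c : ℝ) : |min a c - min b c| ≤ |a - b| := by
  rcases le_total a c with hac | hac <;> rcases le_total b c with hbc | hbc <;>
    simp only [min_eq_left, min_eq_right, hac, hbc] <;>
    rw [abs_sub_le_iff] <;>
    constructor <;>
    linarith [le_abs_self (a - b), neg_abs_le (a - b)]

lemma four_pt {X : Type u} [MetricSpace X] {δ : ℝ} (hhyp : IsGromovHyperbolic X δ)
    (A B C W : X) :
    min (dist A W + dist B W - dist A B) (dist B W + dist C W - dist B C) - 2 * δ ≤
      dist A W + dist C W - dist A C := by
  have h := hhyp A C B W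
  rcases max_cases (dist A B + dist C W) (dist A W + dist C B) with ⟨he, _⟩ | ⟨he, _⟩ <;>
      rw [he] at h
  · have := min_le_left (dist A W + dist B W - dist A B) (dist B W + dist C W - dist B C)
    linarith
  · have := min_le_right (dist A W + dist B W - dist A B) (dist B W + dist C W - dist B C)
    rw [dist_comm C B] at h
    linarith

lemma trackEst {X : Type u} [MetricSpace X] {δ : ℝ} (hδ : 0 ≤ δ) (hhyp : IsGromovHyperbolic X δ)
    (α : ℝ → X) (hα : IsGeodesicRay 0 α) (x : X) (γ : ℝ → X) (n u : ℝ) (hn : 0 ≤ n)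
    (hγ : IsGeodesicOn γ 0 (dist x (α n))) (hγ0 : γ 0 = x) (hγL : γ (dist x (α n)) = α n)
    (hu : 0 ≤ u) (huL : u ≤ dist x (α n))
    (hcond : dist x (α 0) ≤ (n - dist x (α n)) + 2 * u)
    (hv0 : 0 ≤ u + (n - dist x (α n))) :
    dist (γ u) (α (u + (n - dist x (α n)))) ≤ 4 * δ := by
  set v := u + (n - dist x (α n)) with hvdef
  have hL0 : (0:ℝ) ≤ dist x (α n) := dist_nonneg
  have hvn : v ≤ n := by rw [hvdef]; linarith
  have hm0 : (0:ℝ) ∈ Set.Icc (0:ℝ) (dist x (α n)) := ⟨le_refl 0, hL0⟩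
  have hmu : u ∈ Set.Icc (0:ℝ) (dist x (α n)) := ⟨hu, huL⟩
  have hmL : dist x (α n) ∈ Set.Icc (0:ℝ) (dist x (α n)) := ⟨hL0, le_refl _⟩
  have d1 : dist (γ u) (α n) = dist x (α n) - u := by
    have h := hγ u hmu _ hmL
    rw [hγL] at h
    rw [h, abs_of_nonpos (by linarith)]; ring
  have d2 : dist x (γ u) = u := by
    have h := hγ 0 hm0 u hmu
    rw [hγ0] at h
    rw [h, abs_of_nonpos (by linarith)]; ring
  have d3 : dist (α v) (α n) = n - v := by
    have h := hα v (Set.mem_Ici.mpr hv0) n (Set.mem_Ici.mpr hn)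
    rw [h, abs_of_nonpos (by linarith : v - n ≤ 0)]; ring
  have d4' : dist (α 0) (α v) = v := by
    have h := hα 0 (Set.mem_Ici.mpr le_rfl) v (Set.mem_Ici.mpr hv0)
    rw [h, abs_of_nonpos (by linarith : (0:ℝ) - v ≤ 0)]; ring
  have d5 : dist (α 0) (α n) = n := by
    have h := hα 0 (Set.mem_Ici.mpr le_rfl) n (Set.mem_Ici.mpr hn)
    rw [h, abs_of_nonpos (by linarith : (0:ℝ) - n ≤ 0)]; ring
  have d2' : dist (γ u) x = u := by rw [dist_comm]; exact d2
  have h1 := four_pt hhyp x (α 0) (α v) (α n)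
  rw [d5, d3, d4'] at h1
  have hxav : dist x (α v) ≤ u + 2 * δ := by
    rcases min_cases (dist x (α n) + n - dist x (α 0)) (n + (n - v) - v) with ⟨he, _⟩ | ⟨he, _⟩ <;>
      rw [he] at h1 <;> linarith
  have h2 := four_pt hhyp (γ u) x (α v) (α n)
  rw [d1, d2', d3] at h2
  rcases min_cases (dist x (α n) - u + dist x (α n) - u)
      (dist x (α n) + (n - v) - dist x (α v)) with ⟨he, _⟩ | ⟨he, _⟩ <;>
    rw [he] at h2 <;> linarith

/-- In a proper geodesic `δ`-hyperbolic space, for a geodesic ray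
`α : [0,∞) → X` and `α'(t) = α(t + 6δ)`, the funnel `F(α')` is contained in the horoball
`H(α)`. -/
theorem funnel_subset_horoball (X : Type u) [MetricSpace X] [ProperSpace X]
    (hgeo : IsGeodesicSpace X) (δ : ℝ) (hδ : 0 ≤ δ) (hhyp : IsGromovHyperbolic X δ)
    (α : ℝ → X) (hα : IsGeodesicRay 0 α) :
    funnel 0 (fun t => α (t + 6 * δ)) ⊆ horoball δ 0 α := by
  intro x hx
  have h6δ : (0:ℝ) ≤ 6 * δ := by linarith
  have hαd : ∀ u v : ℝ, 0 ≤ u → 0 ≤ v → dist (α u) (α v) = |u - v| := fun u v hu hv =>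
    hα u hu v hv
  set α' : ℝ → X := fun t => α (t + 6 * δ) with hα'def
  set S : Set X := α' '' Set.Ici 0 with hSdef
  have hxfun : Metric.infDist x S ≤ Metric.infDist (α' 0) (nearestPoints S x) := hx
  set f : ℝ → ℝ := fun t => dist x (α' t) with hfdef
  have hf0 : 0 ≤ f 0 := dist_nonneg
  have hflb : ∀ t, 0 ≤ t → t - f 0 ≤ f t := by
    intro t ht
    have h1 : dist (α' 0) (α' t) = t := by
      simp only [hα'def]
      rw [hαd (0 + 6 * δ) (t + 6 * δ) (by linarith) (by linarith)]
      rw [abs_of_nonpos (by linarith)]; ring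
    have := dist_triangle (α' 0) x (α' t)
    rw [h1] at this
    simp only [hfdef]
    rw [dist_comm (α' 0) x] at this
    linarith
  set M : ℝ := 2 * f 0 + 1 with hMdef
  have hM0 : (0:ℝ) ≤ M := by linarith
  have hfc : ContinuousOn f (Set.Icc 0 M) := by
    rw [Metric.continuousOn_iff]
    intro b hb ε hε
    refine ⟨ε, hε, fun a ha hab => ?_⟩
    have h1 : |dist x (α' a) - dist x (α' b)| ≤ dist (α' a) (α' b) := by
      have h := abs_dist_sub_le (α' a) (α' b) x
      rwa [dist_comm (α' a) x, dist_comm (α' b) x] at h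
    have h2 : dist (α' a) (α' b) = |a - b| := by
      simp only [hα'def]
      rw [hαd (a + 6 * δ) (b + 6 * δ) (by linarith [ha.1]) (by linarith [hb.1])]
      congr 1; ring
    rw [Real.dist_eq] at hab ⊢
    calc |f a - f b| ≤ dist (α' a) (α' b) := h1
      _ = |a - b| := h2
      _ < ε := hab
  obtain ⟨t₀, ht₀mem, ht₀min⟩ :=
    isCompact_Icc.exists_isMinOn (Set.nonempty_Icc.mpr hM0) hfc
  have ht₀0 : 0 ≤ t₀ := ht₀mem.1
  have hminIcc : ∀ t ∈ Set.Icc (0:ℝ) M, f t₀ ≤ f t := fun t ht => ht₀min ht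
  have hft₀f0 : f t₀ ≤ f 0 := hminIcc 0 ⟨le_refl 0, hM0⟩
  have hmin : ∀ t, 0 ≤ t → f t₀ ≤ f t := by
    intro t ht
    by_cases h : t ≤ M
    · exact hminIcc t ⟨ht, h⟩
    · push_neg at h
      have := hflb t ht
      linarith
  have hSne : S.Nonempty := ⟨α' 0, ⟨0, Set.mem_Ici.mpr le_rfl, rfl⟩⟩
  have hinf : Metric.infDist x S = f t₀ := by
    refine le_antisymm (Metric.infDist_le_dist_of_mem ⟨t₀, Set.mem_Ici.mpr ht₀0, rfl⟩) ?_
    by_contra hcon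
    push_neg at hcon
    obtain ⟨y, hyS, hy⟩ := (Metric.infDist_lt_iff hSne).mp hcon
    obtain ⟨t, ht, rfl⟩ := hyS
    exact absurd hy (not_lt.mpr (hmin t ht))
  have hpmem : α' t₀ ∈ nearestPoints S x :=
    ⟨⟨t₀, Set.mem_Ici.mpr ht₀0, rfl⟩, hinf.symm⟩
  have hD : f t₀ ≤ t₀ := by
    have h1 : Metric.infDist (α' 0) (nearestPoints S x) ≤ dist (α' 0) (α' t₀) :=
      Metric.infDist_le_dist_of_mem hpmem
    have h2 : dist (α' 0) (α' t₀) = t₀ := by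
      simp only [hα'def]
      rw [hαd (0 + 6 * δ) (t₀ + 6 * δ) (by linarith) (by linarith)]
      rw [abs_of_nonpos (by linarith)]; ring
    have := hxfun
    rw [hinf] at this
    linarith
  -- basic data about geodesics to points α n
  set s : ℝ := t₀ + 6 * δ with hsdef
  have hs0 : 0 ≤ s := by linarith
  have hDs : dist x (α s) ≤ s - 6 * δ := by
    have : dist x (α s) = f t₀ := rfl
    rw [this]; linarith
  set R0 : ℝ := dist x (α 0) with hR0def
  have hR00 : 0 ≤ R0 := dist_nonneg
  choose γ hγ hγ0 hγL using fun n : ℕ => hgeo x (α (n : ℝ))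
  set L : ℕ → ℝ := fun n => dist x (α (n : ℝ)) with hLdef
  have hL0 : ∀ n, 0 ≤ L n := fun n => dist_nonneg
  set cs : ℕ → ℝ := fun n => (n : ℝ) - L n with hcsdef
  have hLlb : ∀ n : ℕ, (n : ℝ) - R0 ≤ L n := by
    intro n
    have h1 := dist_triangle (α 0) x (α (n : ℝ))
    have h2 : dist (α 0) (α (n : ℝ)) = (n : ℝ) := by
      rw [hαd 0 (n : ℝ) le_rfl (Nat.cast_nonneg n), abs_of_nonpos (by simp)]
      simp
    rw [h2, dist_comm (α 0) x] at h1
    simp only [hLdef, hR0def]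
    linarith
  have hcmono : Monotone cs := by
    refine monotone_nat_of_le_succ fun n => ?_
    have h2 : dist (α (n : ℝ)) (α ((n : ℝ) + 1)) = 1 := by
      rw [hαd (n : ℝ) ((n : ℝ) + 1) (Nat.cast_nonneg n) (by positivity)]
      rw [abs_of_nonpos (by linarith)]; ring
    have h1 := dist_triangle x (α (n : ℝ)) (α ((n : ℝ) + 1))
    rw [h2] at h1
    simp only [hcsdef, hLdef]
    push_cast
    linarith
  have hcbdd : BddAbove (Set.range cs) := by
    refine ⟨R0, ?_⟩
    rintro y ⟨n, rfl⟩
    have := hLlb n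
    simp only [hcsdef]
    linarith
  set c : ℝ := ⨆ n, cs n with hcdef
  have hctend : Tendsto cs atTop (𝓝 c) := tendsto_atTop_ciSup hcmono hcbdd
  have hcs6 : ∀ n : ℕ, s ≤ (n : ℝ) → 6 * δ ≤ cs n := by
    intro n hn
    have h1 := dist_triangle x (α s) (α (n : ℝ))
    have h2 : dist (α s) (α (n : ℝ)) = (n : ℝ) - s := by
      rw [hαd s (n : ℝ) hs0 (Nat.cast_nonneg n), abs_of_nonpos (by linarith)]; ring
    rw [h2] at h1
    simp only [hcsdef, hLdef]
    linarith
  have hc6 : 6 * δ ≤ c := by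
    have h1 := hcs6 ⌈s⌉₊ (Nat.le_ceil s)
    have h2 := le_ciSup hcbdd ⌈s⌉₊
    rw [← hcdef] at h2
    linarith
  have hc0 : 0 ≤ c := by linarith
  have hcsle : ∀ n, cs n ≤ c := fun n => le_ciSup hcbdd n
  -- enumeration of nonnegative rationals (via absolute values)
  set Q : ℕ → ℝ := fun k => |(((Denumerable.eqv ℚ).symm k : ℚ) : ℝ)| with hQdef
  have hQ0 : ∀ k, 0 ≤ Q k := fun k => abs_nonneg _
  have hQd : ∀ w : ℝ, 0 ≤ w → ∀ ε > (0:ℝ), ∃ k, |Q k - w| < ε := by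
    intro w hw ε hε
    obtain ⟨r, hr1, hr2⟩ := exists_rat_btwn (show w - ε < w by linarith)
    refine ⟨(Denumerable.eqv ℚ) r, ?_⟩
    have he : ((Denumerable.eqv ℚ).symm ((Denumerable.eqv ℚ) r) : ℚ) = r :=
      Equiv.symm_apply_apply _ r
    simp only [hQdef, he]
    have h1 := abs_abs_sub_abs_le_abs_sub (r : ℝ) w
    rw [abs_of_nonneg hw] at h1
    have h2 : |(r : ℝ) - w| < ε := by
      rw [abs_of_nonpos (by linarith)]; linarith
    linarith
  -- the sequence of geodesics, viewed in a compact product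
  set G : ℕ → (ℕ → X) := fun n k => γ n (min (Q k) (L n)) with hGdef
  have hGmem : ∀ n, G n ∈ Set.pi Set.univ (fun k => closedBall x (Q k)) := by
    intro n
    rw [Set.mem_univ_pi]
    intro k
    rw [mem_closedBall, dist_comm]
    have hmem : min (Q k) (L n) ∈ Set.Icc 0 (L n) :=
      ⟨le_min (hQ0 k) (hL0 n), min_le_right _ _⟩
    have h := hγ n 0 ⟨le_refl 0, hL0 n⟩ (min (Q k) (L n)) hmem
    rw [hγ0 n] at h
    simp only [hGdef]
    rw [h, abs_of_nonpos (by linarith [hmem.1])]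
    simp only [neg_sub, sub_zero]
    exact min_le_left _ _
  obtain ⟨g, -, φ, hφ, hφt⟩ :=
    (isCompact_univ_pi fun k => isCompact_closedBall x (Q k)).tendsto_subseq hGmem
  have hpt : ∀ k, Tendsto (fun j => G (φ j) k) atTop (𝓝 (g k)) := by
    intro k
    exact tendsto_pi_nhds.mp hφt k
  -- distance estimate within one geodesic
  have hdist2 : ∀ (n : ℕ) (a b : ℝ), 0 ≤ a → 0 ≤ b →
      dist (γ n (min a (L n))) (γ n (min b (L n))) ≤ |a - b| := by
    intro n a b ha hb
    have hma : min a (L n) ∈ Set.Icc 0 (L n) := ⟨le_min ha (hL0 n), min_le_right _ _⟩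
    have hmb : min b (L n) ∈ Set.Icc 0 (L n) := ⟨le_min hb (hL0 n), min_le_right _ _⟩
    rw [hγ n _ hma _ hmb]
    exact min_lip a b (L n)
  -- the limiting ray
  set F : ℝ → ℕ → X := fun w j => γ (φ j) (min (max w 0) (L (φ j))) with hFdef
  have hFc : ∀ w, CauchySeq (F w) := by
    intro w
    rw [Metric.cauchySeq_iff]
    intro ε hε
    obtain ⟨k, hk⟩ := hQd (max w 0) (le_max_right _ _) (ε / 4) (by linarith)
    obtain ⟨N, hN⟩ := Metric.cauchySeq_iff.mp (hpt k).cauchySeq (ε / 4) (by linarith)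
    refine ⟨N, fun m hm n hn => ?_⟩
    have e1 : dist (F w m) (G (φ m) k) ≤ |max w 0 - Q k| :=
      hdist2 (φ m) (max w 0) (Q k) (le_max_right _ _) (hQ0 k)
    have e2 : dist (F w n) (G (φ n) k) ≤ |max w 0 - Q k| :=
      hdist2 (φ n) (max w 0) (Q k) (le_max_right _ _) (hQ0 k)
    have e3 := hN m hm n hn
    have habs : |max w 0 - Q k| < ε / 4 := by rw [abs_sub_comm]; exact hk
    calc dist (F w m) (F w n)
        ≤ dist (F w m) (G (φ m) k) + dist (G (φ m) k) (G (φ n) k) + dist (G (φ n) k) (F w n) :=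
          dist_triangle4 _ _ _ _
      _ ≤ |max w 0 - Q k| + ε / 4 + |max w 0 - Q k| := by
          rw [dist_comm (G (φ n) k) (F w n)]
          exact add_le_add (add_le_add e1 (le_of_lt e3)) e2
      _ < ε := by linarith
  choose β hβ using fun w => cauchySeq_tendsto_of_complete (hFc w)
  have hφj : ∀ j : ℕ, (j : ℝ) ≤ ((φ j : ℕ) : ℝ) := fun j => Nat.cast_le.mpr hφ.le_apply
  have hLφ : ∀ w : ℝ, ∀ᶠ j in atTop, w ≤ L (φ j) := by
    intro w
    filter_upwards [eventually_ge_atTop ⌈w + R0⌉₊] with j hj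
    have h1 : w + R0 ≤ (j : ℝ) := le_trans (Nat.le_ceil _) (Nat.cast_le.mpr hj)
    have h2 := hLlb (φ j)
    have h3 := hφj j
    linarith
  have hFeq : ∀ w : ℝ, 0 ≤ w → ∀ j, w ≤ L (φ j) → F w j = γ (φ j) w := by
    intro w hw j hj
    simp only [hFdef, max_eq_left hw, min_eq_left hj]
  -- geodesic property of the limit
  have hβd : ∀ w, 0 ≤ w → ∀ z, 0 ≤ z → dist (β w) (β z) = |w - z| := by
    intro w hw z hz
    have key : ∀ ε > (0:ℝ), dist (β w) (β z) ≤ |w - z| + ε ∧ |w - z| ≤ dist (β w) (β z) + ε := by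
      intro ε hε
      have E : ∀ᶠ j in atTop, dist (F w j) (β w) < ε / 2 ∧ dist (F z j) (β z) < ε / 2 ∧
          w ≤ L (φ j) ∧ z ≤ L (φ j) := by
        have e1 := (Metric.tendsto_atTop.mp (hβ w) (ε / 2) (by linarith))
        have e2 := (Metric.tendsto_atTop.mp (hβ z) (ε / 2) (by linarith))
        obtain ⟨N₁, hN₁⟩ := e1
        obtain ⟨N₂, hN₂⟩ := e2
        filter_upwards [eventually_ge_atTop N₁, eventually_ge_atTop N₂, hLφ w, hLφ z] with
          j h1 h2 h3 h4
        exact ⟨hN₁ j h1, hN₂ j h2, h3, h4⟩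
      obtain ⟨j, h1, h2, h3, h4⟩ := E.exists
      rw [hFeq w hw j h3] at h1
      rw [hFeq z hz j h4] at h2
      have hd : dist (γ (φ j) w) (γ (φ j) z) = |w - z| := hγ (φ j) w ⟨hw, h3⟩ z ⟨hz, h4⟩
      constructor
      · have := dist_triangle (β w) (γ (φ j) w) (β z)
        have := dist_triangle (γ (φ j) w) (γ (φ j) z) (β z)
        rw [dist_comm (γ (φ j) w) (β w)] at h1
        linarith [dist_comm (γ (φ j) z) (β z) ▸ h2]
      · have t1 := dist_triangle (γ (φ j) w) (β w) (γ (φ j) z)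
        have t2 := dist_triangle (β w) (β z) (γ (φ j) z)
        rw [← hd]
        have h2' : dist (β z) (γ (φ j) z) < ε / 2 := by rw [dist_comm]; exact h2
        linarith
    refine le_antisymm (le_of_forall_pos_le_add fun ε hε => (key ε hε).1)
      (le_of_forall_pos_le_add fun ε hε => (key ε hε).2)
  have hβ0 : β 0 = x := by
    have hFx : ∀ j, F 0 j = x := by
      intro j
      rw [hFeq 0 le_rfl j (hL0 (φ j))]
      exact hγ0 (φ j)
    have h := hβ 0
    rw [show F 0 = fun _ => x from funext hFx] at h
    exact tendsto_nhds_unique h tendsto_const_nhds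
  -- 4δ-tracking of the limit ray
  have htrack : ∀ w, R0 / 2 ≤ w → dist (β w) (α (w + c)) ≤ 4 * δ := by
    intro w hw
    have hw0 : 0 ≤ w := le_trans (by positivity) hw
    refine le_of_forall_pos_le_add ?_
    intro ε hε
    have hcφ : Tendsto (fun j => cs (φ j)) atTop (𝓝 c) := hctend.comp hφ.tendsto_atTop
    obtain ⟨N₁, hN₁⟩ := Metric.tendsto_atTop.mp (hβ w) (ε / 2) (by linarith)
    obtain ⟨N₂, hN₂⟩ := Metric.tendsto_atTop.mp hcφ (ε / 2) (by linarith)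
    have E : ∀ᶠ j in atTop, dist (F w j) (β w) < ε / 2 ∧ |cs (φ j) - c| < ε / 2 ∧
        s ≤ ((φ j : ℕ) : ℝ) ∧ w ≤ L (φ j) := by
      filter_upwards [eventually_ge_atTop N₁, eventually_ge_atTop N₂,
        eventually_ge_atTop ⌈s⌉₊, hLφ w] with j h1 h2 h3 h4
      refine ⟨hN₁ j h1, ?_, ?_, h4⟩
      · have := hN₂ j h2
        rwa [Real.dist_eq] at this
      · calc s ≤ (⌈s⌉₊ : ℝ) := Nat.le_ceil s
          _ ≤ (j : ℝ) := Nat.cast_le.mpr h3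
          _ ≤ ((φ j : ℕ) : ℝ) := hφj j
    obtain ⟨j, h1, h2, h3, h4⟩ := E.exists
    have hcsj : 6 * δ ≤ cs (φ j) := hcs6 (φ j) h3
    have hcsj0 : 0 ≤ cs (φ j) := by linarith
    have hest : dist (γ (φ j) w) (α (w + (((φ j : ℕ) : ℝ) - L (φ j)))) ≤ 4 * δ := by
      refine trackEst hδ hhyp α hα x (γ (φ j)) ((φ j : ℕ) : ℝ) w (Nat.cast_nonneg _)
        (hγ (φ j)) (hγ0 (φ j)) (hγL (φ j)) hw0 h4 ?_ ?_
      · have e1 : 0 ≤ ((φ j : ℕ) : ℝ) - dist x (α ((φ j : ℕ) : ℝ)) := hcsj0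
        have e2 : R0 = dist x (α 0) := rfl
        rw [← e2]
        linarith
      · have e1 : 0 ≤ ((φ j : ℕ) : ℝ) - dist x (α ((φ j : ℕ) : ℝ)) := hcsj0
        linarith
    have harc : dist (α (w + cs (φ j))) (α (w + c)) = |cs (φ j) - c| := by
      rw [hαd (w + cs (φ j)) (w + c) (by linarith) (by linarith)]
      congr 1; ring
    have hcseq : (((φ j : ℕ) : ℝ) - L (φ j)) = cs (φ j) := rfl
    rw [hcseq] at hest
    rw [hFeq w hw0 j h4] at h1
    calc dist (β w) (α (w + c))
        ≤ dist (β w) (γ (φ j) w) + dist (γ (φ j) w) (α (w + cs (φ j))) +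
            dist (α (w + cs (φ j))) (α (w + c)) := dist_triangle4 _ _ _ _
      _ ≤ ε / 2 + 4 * δ + ε / 2 := by
          rw [dist_comm (β w) (γ (φ j) w)]
          rw [harc]
          exact add_le_add (add_le_add (le_of_lt h1) hest) (by linarith)
      _ = 4 * δ + ε := by ring
  -- assemble the horoball membership
  refine ⟨c, hc0, fun t => β (t - c), ?_, ?_, c, le_refl c, ?_⟩
  · intro t₁ ht₁ t₂ ht₂
    rw [Set.mem_Ici] at ht₁ ht₂
    have h := hβd (t₁ - c) (by linarith) (t₂ - c) (by linarith)
    rw [h]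
    congr 1; ring
  · refine ⟨c + R0 / 2, fun t ht => ?_⟩
    have h := htrack (t - c) (by linarith)
    have he : t - c + c = t := by ring
    rw [he] at h
    rw [dist_comm]
    linarith
  · simp only [sub_self]
    exact hβ0
end

section
/- In a proper, geodesic, δ-hyperbolic metric space X, a point x of the visual boundary of X is a funnelled limit point of a subset A ⊆ X if and only if x is a horospherical limit point of A. -/
set_option autoImplicit false

universe u v

open Set Metric

section AuxProof

variable {X : Type u} [MetricSpace X]

/-- Nearest-point existence on (the image of) a geodesic ray, in a proper space. -/
lemma exists_nearest_on_ray [ProperSpace X] {a : ℝ} {α : ℝ → X}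
    (hα : IsGeodesicRay a α) (x : X) :
    ∃ q, a ≤ q ∧ dist x (α q) = Metric.infDist x (α '' Set.Ici a) ∧
      ∀ u, a ≤ u → dist x (α q) ≤ dist x (α u) := by
  have hSne : (α '' Set.Ici a).Nonempty := ⟨α a, a, le_refl a, rfl⟩
  set S := α '' Set.Ici a with hSdef
  set D := Metric.infDist x S with hDdef
  have hD0 : 0 ≤ D := Metric.infDist_nonneg
  obtain ⟨w, hwS, hwlt⟩ := (Metric.infDist_lt_iff hSne).1 (show D < D + 1 by linarith)
  obtain ⟨u', hu', rfl⟩ := hwS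
  have hu'a : a ≤ u' := hu'
  set M := a + dist x (α a) + (D + 1) with hMdef
  have haM : a ≤ M := by
    have := dist_nonneg (x := x) (y := α a); linarith
  have hu'M : u' ≤ M := by
    have h1 : dist (α a) (α u') = u' - a := by
      rw [hα a (le_refl a) u' hu'a, abs_of_nonpos (by linarith)]; ring
    have h2 := dist_triangle (α a) x (α u')
    rw [h1, dist_comm (α a) x] at h2
    linarith
  have hlip : LipschitzOnWith 1 α (Set.Icc a M) := by
    apply LipschitzOnWith.of_dist_le_mul
    intro p hp q hq
    rw [hα p hp.1 q hq.1, Real.dist_eq]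
    simp
  have hKcomp : IsCompact (α '' Set.Icc a M) :=
    isCompact_Icc.image_of_continuousOn hlip.continuousOn
  obtain ⟨z, hzK, hz⟩ := hKcomp.exists_infDist_eq_dist ⟨α a, a, ⟨le_refl a, haM⟩, rfl⟩ x
  obtain ⟨qz, hqz, rfl⟩ := hzK
  have hmin : ∀ u, a ≤ u → dist x (α qz) ≤ dist x (α u) := by
    intro u hu
    rcases le_or_gt u M with huM | huM
    · rw [← hz]
      exact Metric.infDist_le_dist_of_mem ⟨u, ⟨hu, huM⟩, rfl⟩
    · have h1 : dist x (α qz) ≤ dist x (α u') := by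
        rw [← hz]
        exact Metric.infDist_le_dist_of_mem ⟨u', ⟨hu'a, hu'M⟩, rfl⟩
      have h2 : dist (α a) (α u) = u - a := by
        rw [hα a (le_refl a) u hu, abs_of_nonpos (by linarith)]; ring
      have h3 := dist_triangle (α a) x (α u)
      rw [h2, dist_comm (α a) x] at h3
      linarith
  refine ⟨qz, hqz.1, ?_, hmin⟩
  refine le_antisymm ?_ (Metric.infDist_le_dist_of_mem ⟨qz, hqz.1, rfl⟩)
  by_contra hcon
  obtain ⟨w, hwS, hwlt⟩ := (Metric.infDist_lt_iff hSne).1 (not_le.1 hcon)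
  obtain ⟨u, hu, rfl⟩ := hwS
  exact absurd hwlt (not_lt.2 (hmin u hu))

/-- Projection lower bound: if `α q` is a nearest point of the ray to `x`, then for
`s ≥ q` we have `d(x, α s) ≥ d(x, α q) + (s - q) - 4δ`. -/
lemma proj_lower {δ : ℝ} (hhyp : IsGromovHyperbolic X δ) {a : ℝ} {α : ℝ → X}
    (hα : IsGeodesicRay a α) (x : X) {q s : ℝ} (hq : a ≤ q) (hqs : q ≤ s)
    (hnear : ∀ u, a ≤ u → dist x (α q) ≤ dist x (α u)) :
    dist x (α q) + (s - q) - 4 * δ ≤ dist x (α s) := by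
  have has : a ≤ s := hq.trans hqs
  obtain ⟨t', ht'⟩ : ∃ t', t' = (dist x (α q) + (s - q) - dist x (α s)) / 2 := ⟨_, rfl⟩
  have hqs' : dist (α q) (α s) = s - q := by
    rw [hα q hq s has, abs_of_nonpos (show q - s ≤ 0 by linarith)]; ring
  have htri1 := dist_triangle x (α q) (α s)
  have htri2 := dist_triangle x (α s) (α q)
  rw [hqs'] at htri1
  rw [dist_comm (α s) (α q), hqs'] at htri2
  have ht0 : 0 ≤ t' := by rw [ht']; linarith
  have ht1 : t' ≤ s - q := by rw [ht']; linarith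
  have hyq : dist (α (q + t')) (α q) = t' := by
    rw [hα (q + t') (Set.mem_Ici.mpr (by linarith)) q hq,
      abs_of_nonneg (show (0:ℝ) ≤ q + t' - q by linarith)]
    ring
  have hys : dist (α (q + t')) (α s) = s - q - t' := by
    rw [hα (q + t') (Set.mem_Ici.mpr (by linarith)) s has,
      abs_of_nonpos (show q + t' - s ≤ 0 by linarith)]
    ring
  have hyD : dist x (α q) ≤ dist x (α (q + t')) := hnear _ (by linarith)
  have h4 := hhyp x (α (q + t')) (α q) (α s)
  rw [hqs', hys, hyq] at h4
  have hmaxle : max (dist x (α q) + (s - q - t')) (dist x (α s) + t') ≤ dist x (α s) + t' :=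
    max_le (by rw [ht']; ring_nf; linarith) (le_refl _)
  have h5 := le_trans h4 (by linarith :
    max (dist x (α q) + (s - q - t')) (dist x (α s) + t') + 2 * δ ≤ dist x (α s) + t' + 2 * δ)
  rw [ht'] at h5
  linarith

/-- From a point `x` whose nearest point on the ray `α` is `α q`, there is a geodesic
ray `β` from `x` which eventually `6δ`-fellow-travels `α` (with the natural shift). -/
lemma exists_asymp_ray [ProperSpace X] (hgeo : IsGeodesicSpace X) {δ : ℝ} (hδ : 0 ≤ δ)
    (hhyp : IsGromovHyperbolic X δ) {a : ℝ} {α : ℝ → X} (hα : IsGeodesicRay a α)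
    (x : X) {q : ℝ} (hq : a ≤ q)
    (hnear : ∀ u, a ≤ u → dist x (α q) ≤ dist x (α u)) :
    ∃ β : ℝ → X, IsGeodesicRay 0 β ∧ β 0 = x ∧
      ∀ t, q ≤ t → dist (α t) (β (t - q + dist x (α q))) ≤ 6 * δ := by
  classical
  set D := dist x (α q) with hD
  have hD0 : 0 ≤ D := dist_nonneg
  choose γ hγ hγ0 hγe using fun n : ℕ => hgeo x (α (q + n))
  set L : ℕ → ℝ := fun n => dist x (α (q + n)) with hLdef
  have hL0 : ∀ n, 0 ≤ L n := fun n => dist_nonneg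
  have hqn : ∀ n : ℕ, a ≤ q + n := fun n => le_trans hq (le_add_of_nonneg_right (Nat.cast_nonneg n))
  have hLproj : ∀ n : ℕ, D + n - 4 * δ ≤ L n := by
    intro n
    have := proj_lower hhyp hα x hq (le_add_of_nonneg_right (Nat.cast_nonneg n)) hnear
    simpa using this
  set c : ℝ → ℕ → X := fun τ n => γ n (max 0 (min τ (L n))) with hcdef
  have hmIcc : ∀ τ n, max 0 (min τ (L n)) ∈ Set.Icc 0 (L n) :=
    fun τ n => ⟨le_max_left _ _, max_le (hL0 n) (min_le_right _ _)⟩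
  have hc_ball : ∀ τ n, dist (c τ n) x ≤ |τ| := by
    intro τ n
    have h := hγ n _ (hmIcc τ n) 0 ⟨le_refl 0, hL0 n⟩
    rw [hγ0 n] at h
    rw [hcdef]
    simp only
    rw [h, sub_zero, abs_of_nonneg (le_max_left _ _)]
    exact max_le (abs_nonneg τ) ((min_le_left _ _).trans (le_abs_self τ))
  set U : Ultrafilter ℕ := Ultrafilter.of Filter.atTop with hUdef
  have hU : (U : Filter ℕ) ≤ Filter.atTop := Ultrafilter.of_le _
  have hlim : ∀ τ : ℝ, ∃ y : X, Filter.Tendsto (c τ) (U : Filter ℕ) (nhds y) := by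
    intro τ
    obtain ⟨y, -, hy⟩ := (isCompact_closedBall x |τ|).ultrafilter_le_nhds (U.map (c τ))
      (by
        rw [Ultrafilter.coe_map, Filter.le_principal_iff, Filter.mem_map]
        exact Filter.univ_mem' fun n => Metric.mem_closedBall.2 (hc_ball τ n))
    exact ⟨y, by rwa [Filter.Tendsto, ← Ultrafilter.coe_map]⟩
  choose β hβ using hlim
  have hev_eq : ∀ τ : ℝ, 0 ≤ τ → ∀ᶠ n in (U : Filter ℕ), c τ n = γ n τ ∧ τ ≤ L n := by
    intro τ hτ
    apply Filter.Eventually.filter_mono hU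
    rw [Filter.eventually_atTop]
    refine ⟨⌈τ + 4 * δ - D⌉₊, fun n hn => ?_⟩
    have h1 : τ + 4 * δ - D ≤ (n : ℝ) := le_trans (Nat.le_ceil _) (Nat.cast_le.2 hn)
    have hLn : τ ≤ L n := by have := hLproj n; linarith
    refine ⟨?_, hLn⟩
    rw [hcdef]
    simp only
    rw [min_eq_left hLn, max_eq_right hτ]
  have hray : IsGeodesicRay 0 β := by
    intro u hu v hv
    have hev : ∀ᶠ n in (U : Filter ℕ), dist (c u n) (c v n) = |u - v| := by
      filter_upwards [hev_eq u hu, hev_eq v hv] with n h1 h2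
      rw [h1.1, h2.1]
      exact hγ n u ⟨hu, h1.2⟩ v ⟨hv, h2.2⟩
    have t1 : Filter.Tendsto (fun n => dist (c u n) (c v n)) (U : Filter ℕ)
        (nhds (dist (β u) (β v))) := (hβ u).dist (hβ v)
    have t2 : Filter.Tendsto (fun n => dist (c u n) (c v n)) (U : Filter ℕ)
        (nhds |u - v|) :=
      Filter.Tendsto.congr' (hev.mono fun n h => h.symm) tendsto_const_nhds
    exact tendsto_nhds_unique t1 t2
  have hβ0 : β 0 = x := by
    have hc0 : ∀ n, c 0 n = x := by
      intro n
      rw [hcdef]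
      simp only
      rw [min_eq_left (hL0 n), max_self, hγ0 n]
    exact tendsto_nhds_unique (hβ 0)
      (tendsto_const_nhds.congr fun n => (hc0 n).symm)
  refine ⟨β, hray, hβ0, ?_⟩
  intro t ht
  have hat : a ≤ t := hq.trans ht
  set τ := t - q + D with hτdef
  have hτ0 : 0 ≤ τ := by rw [hτdef]; linarith
  have hxt : dist (α t) x ≤ D + (t - q) := by
    have h1 : dist (α q) (α t) = t - q := by
      rw [hα q hq t hat, abs_of_nonpos (by linarith)]; ring
    have h2 := dist_triangle (α t) (α q) x
    rw [dist_comm (α t) (α q), h1, dist_comm (α q) x, ← hD] at h2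
    linarith
  have hev2 : ∀ᶠ n in (U : Filter ℕ), dist (c τ n) (α t) ≤ 6 * δ := by
    have hev3 : ∀ᶠ (n : ℕ) in Filter.atTop, τ + 4 * δ - D ≤ (n : ℝ) ∧ t - q ≤ (n : ℝ) := by
      rw [Filter.eventually_atTop]
      refine ⟨⌈max (τ + 4 * δ - D) (t - q)⌉₊, fun n hn => ?_⟩
      have h1 : max (τ + 4 * δ - D) (t - q) ≤ (n : ℝ) :=
        le_trans (Nat.le_ceil _) (Nat.cast_le.2 hn)
      exact ⟨le_trans (le_max_left _ _) h1, le_trans (le_max_right _ _) h1⟩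
    filter_upwards [Filter.Eventually.filter_mono hU hev3] with n hn
    obtain ⟨hn1, hn2⟩ := hn
    have hLn : τ ≤ L n := by have := hLproj n; linarith
    have hcn : c τ n = γ n τ := by
      rw [hcdef]; simp only
      rw [min_eq_left hLn, max_eq_right hτ0]
    have hyx : dist (γ n τ) x = τ := by
      have h := hγ n τ ⟨hτ0, hLn⟩ 0 ⟨le_refl 0, hL0 n⟩
      rw [hγ0 n] at h
      rw [h, sub_zero, abs_of_nonneg hτ0]
    have hye : dist (γ n τ) (α (q + n)) = L n - τ := by
      have h := hγ n τ ⟨hτ0, hLn⟩ (L n) ⟨hL0 n, le_refl _⟩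
      rw [hγe n] at h
      rw [h, abs_of_nonpos (by linarith)]; ring
    have hts : dist (α t) (α (q + n)) = q + n - t := by
      rw [hα t hat (q + n) (hqn n), abs_of_nonpos (by linarith)]; ring
    have h4 := hhyp (γ n τ) (α t) x (α (q + n))
    have hxqn : dist x (α (q + n)) = L n := rfl
    rw [hyx, hye, hts, hxqn] at h4
    have hmaxle : max (τ + (q + n - t)) (L n - τ + dist (α t) x) ≤ L n + 4 * δ := by
      apply max_le
      · have := hLproj n; rw [hτdef]; linarith
      · rw [hτdef]; linarith
    rw [hcn]
    linarith [le_trans h4 (by linarith : max (τ + (q + n - t)) (L n - τ + dist (α t) x)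
      + 2 * δ ≤ L n + 4 * δ + 2 * δ)]
  have tdist : Filter.Tendsto (fun n => dist (c τ n) (α t)) (U : Filter ℕ)
      (nhds (dist (β τ) (α t))) := (hβ τ).dist tendsto_const_nhds
  have hfin := le_of_tendsto tdist hev2
  rw [dist_comm]
  exact hfin

end AuxProof

/-- In a proper geodesic `δ`-hyperbolic space `X`, a point of the visual
boundary (represented by a geodesic ray `ξ`) is a funnelled limit point of `A ⊆ X` if and
only if it is a horospherical limit point of `A`. -/
theorem funnelled_iff_horospherical (X : Type u) [MetricSpace X] [ProperSpace X]
    (hgeo : IsGeodesicSpace X) (δ : ℝ) (hδ : 0 ≤ δ) (hhyp : IsGromovHyperbolic X δ)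
    (A : Set X) (c : ℝ) (ξ : ℝ → X) (hξ : IsGeodesicRay c ξ) :
    (∀ (a : ℝ) (α : ℝ → X), IsGeodesicRay a α →
        FinHausdorff (α '' Set.Ici a) (ξ '' Set.Ici c) → (funnel a α ∩ A).Nonempty) ↔
    (∀ (a : ℝ) (α : ℝ → X), IsGeodesicRay a α →
        FinHausdorff (α '' Set.Ici a) (ξ '' Set.Ici c) → (horoball δ a α ∩ A).Nonempty) := by
  constructor
  · -- funnelled → horospherical
    intro hF a α hα hFH
    obtain ⟨x, hxFun, hxA⟩ := hF a α hα hFH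
    obtain ⟨q, hq, hqinf, hnear⟩ := exists_nearest_on_ray hα x
    set D := dist x (α q) with hD
    have hD0 : 0 ≤ D := dist_nonneg
    -- funnel condition gives D ≤ q - a
    have hDqa : D ≤ q - a := by
      have h1 : Metric.infDist x (α '' Set.Ici a) ≤
          Metric.infDist (α a) (nearestPoints (α '' Set.Ici a) x) := hxFun
      have h2 : α q ∈ nearestPoints (α '' Set.Ici a) x := ⟨⟨q, hq, rfl⟩, hqinf⟩
      have h3 : Metric.infDist (α a) (nearestPoints (α '' Set.Ici a) x) ≤ dist (α a) (α q) :=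
        Metric.infDist_le_dist_of_mem h2
      have h4 : dist (α a) (α q) = q - a := by
        rw [hα a (le_refl a) q hq, abs_of_nonpos (by linarith)]; ring
      rw [← hqinf] at h1
      rw [h4] at h3
      linarith
    obtain ⟨β, hβray, hβ0, hβft⟩ := exists_asymp_ray hgeo hδ hhyp hα x hq hnear
    refine ⟨x, ⟨q - D, by linarith, fun t => β (t - (q - D)), ?_, ?_, ⟨q - D, le_refl _, ?_⟩⟩, hxA⟩
    · intro u hu v hv
      have hu' : (0:ℝ) ≤ u - (q - D) := by simp only [Set.mem_Ici] at hu; linarith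
      have hv' : (0:ℝ) ≤ v - (q - D) := by simp only [Set.mem_Ici] at hv; linarith
      rw [hβray _ hu' _ hv']
      congr 1
      ring
    · refine ⟨q, fun t ht => ?_⟩
      have h := hβft t ht
      show dist (α t) (β (t - (q - D))) ≤ 6 * δ
      have heq : t - (q - D) = t - q + D := by ring
      rw [heq]
      exact h
    · simpa using hβ0
  · -- horospherical → funnelled
    intro hH a α hα hFH
    have hα' : IsGeodesicRay (a + 10 * δ) α := fun u hu v hv =>
      hα u (by simp only [Set.mem_Ici] at hu ⊢; linarith) v
        (by simp only [Set.mem_Ici] at hv ⊢; linarith)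
    have hFH' : FinHausdorff (α '' Set.Ici (a + 10 * δ)) (ξ '' Set.Ici c) := by
      obtain ⟨C, hC1, hC2⟩ := hFH
      refine ⟨C + 10 * δ, fun s hs => ?_, fun t htm => ?_⟩
      · obtain ⟨u, hu, rfl⟩ := hs
        obtain ⟨w, hw, hdw⟩ := hC1 (α u) ⟨u, by simp only [Set.mem_Ici] at hu ⊢; linarith, rfl⟩
        exact ⟨w, hw, by linarith⟩
      · obtain ⟨s, hs, hds⟩ := hC2 t htm
        obtain ⟨u, hu, rfl⟩ := hs
        simp only [Set.mem_Ici] at hu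
        refine ⟨α (max u (a + 10 * δ)), ⟨max u (a + 10 * δ), Set.mem_Ici.mpr (le_max_right _ _), rfl⟩, ?_⟩
        have h1 : dist (α (max u (a + 10 * δ))) (α u) = max u (a + 10 * δ) - u := by
          rw [hα _ (le_trans hu (le_max_left _ _)) u hu,
            abs_of_nonneg (by simp [le_max_left])]
        have h2 := dist_triangle (α (max u (a + 10 * δ))) (α u) t
        have h3 : max u (a + 10 * δ) - u ≤ 10 * δ := by
          rcases max_cases u (a + 10 * δ) with ⟨hm, _⟩ | ⟨hm, _⟩ <;> rw [hm] <;> linarith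
        rw [h1] at h2
        linarith
    obtain ⟨x, hxH, hxA⟩ := hH (a + 10 * δ) α hα' hFH'
    obtain ⟨b, hb, β, hβray, ⟨T, hT⟩, t₀, ht₀, hβt₀⟩ := hxH
    refine ⟨x, ?_, hxA⟩
    -- show x ∈ funnel a α
    obtain ⟨q0, hq0, hq0inf, hnear0⟩ := exists_nearest_on_ray hα x
    have key : ∀ q, a ≤ q → dist x (α q) = Metric.infDist x (α '' Set.Ici a) →
        Metric.infDist x (α '' Set.Ici a) ≤ q - a := by
      intro q hq hqinf
      have hnear : ∀ u, a ≤ u → dist x (α q) ≤ dist x (α u) := by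
        intro u hu
        rw [hqinf, ← hq0inf]
        exact hnear0 u hu
      set t := max T (max t₀ q) with htdef
      have htT : T ≤ t := le_max_left _ _
      have htt₀ : t₀ ≤ t := le_trans (le_max_left _ _) (le_max_right _ _)
      have htq : q ≤ t := le_trans (le_max_right _ _) (le_max_right _ _)
      have htb : b ≤ t := le_trans ht₀ htt₀
      have hproj := proj_lower hhyp hα x hq htq hnear
      have hup : dist x (α t) ≤ (t - t₀) + 6 * δ := by
        have h1 : dist (β t₀) (β t) = t - t₀ := by
          rw [hβray t₀ ht₀ t htb, abs_of_nonpos (by linarith)]; ring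
        have h2 := dist_triangle (β t₀) (β t) (α t)
        have h3 : dist (β t) (α t) ≤ 6 * δ := by rw [dist_comm]; exact hT t htT
        rw [h1] at h2
        rw [← hβt₀]
        linarith
      rw [← hqinf]
      linarith
    have hDq0 : Metric.infDist x (α '' Set.Ici a) ≤ q0 - a := key q0 hq0 hq0inf
    have hNne : (nearestPoints (α '' Set.Ici a) x).Nonempty :=
      ⟨α q0, ⟨q0, hq0, rfl⟩, hq0inf⟩
    have hlow : Metric.infDist x (α '' Set.Ici a) ≤
        Metric.infDist (α a) (nearestPoints (α '' Set.Ici a) x) := by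
      by_contra hcon
      obtain ⟨w, hwN, hwlt⟩ := (Metric.infDist_lt_iff hNne).1 (not_le.1 hcon)
      obtain ⟨⟨u, hu, rfl⟩, hweq⟩ := hwN
      have h1 : dist (α a) (α u) = u - a := by
        rw [hα a (le_refl a) u hu, abs_of_nonpos (by simp only [Set.mem_Ici] at hu; linarith)]
        ring
      have h2 := key u hu hweq
      rw [h1] at hwlt
      linarith
    exact hlow
end

section
/- Let X be a geodesic metric space, let α:[0,∞)→X be an N-Morse geodesic ray, and let β:[0,∞)→X be a geodesic ray with β(∞)=α(∞) (i.e., α and β are at finite Hausdorff distance). Then there exist a ∈ ℝ and an isometry ρ:[a,∞)→[0,∞) such that α ∼_{δ_N} β∘ρ. -/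
set_option autoImplicit false

universe u v

open Set Metric

/-- Auxiliary: a geodesic ray admits nearest points on its image. -/
lemma ray_nearest' {X : Type*} [MetricSpace X] {γ : ℝ → X} (hγ : IsGeodesicRay 0 γ) (x : X) :
    ∃ u, 0 ≤ u ∧ dist x (γ u) = Metric.infDist x (γ '' Set.Ici 0) := by
  have hAne : (γ '' Set.Ici 0).Nonempty := ⟨γ 0, 0, Set.mem_Ici.2 le_rfl, rfl⟩
  have h0R : (0:ℝ) ≤ 2 * dist x (γ 0) + 1 := by positivity
  have hlip : LipschitzOnWith 1 (fun u => dist x (γ u)) (Set.Icc 0 (2 * dist x (γ 0) + 1)) := by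
    rw [lipschitzOnWith_iff_dist_le_mul]
    intro u hu v hv
    have h1 : dist (γ u) (γ v) = |u - v| := hγ u (Set.mem_Ici.2 hu.1) v (Set.mem_Ici.2 hv.1)
    calc dist (dist x (γ u)) (dist x (γ v)) ≤ dist (γ u) (γ v) :=
          dist_dist_dist_le_right x (γ u) (γ v)
      _ = |u - v| := h1
      _ = dist u v := (Real.dist_eq u v).symm
      _ ≤ ((1 : NNReal) : ℝ) * dist u v := by rw [NNReal.coe_one, one_mul]
  obtain ⟨u₀, hu₀mem, hu₀min⟩ := isCompact_Icc.exists_isMinOn ⟨0, le_rfl, h0R⟩ hlip.continuousOn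
  refine ⟨u₀, hu₀mem.1, ?_⟩
  have hglob : ∀ u, 0 ≤ u → dist x (γ u₀) ≤ dist x (γ u) := by
    intro u hu
    rcases le_or_gt u (2 * dist x (γ 0) + 1) with h | h
    · exact isMinOn_iff.1 hu₀min u ⟨hu, h⟩
    · have h1 : dist (γ 0) (γ u) = u := by
        rw [hγ 0 (Set.mem_Ici.2 le_rfl) u (Set.mem_Ici.2 hu), zero_sub, abs_neg, abs_of_nonneg hu]
      have h2 := dist_triangle (γ 0) x (γ u)
      have h3 : dist x (γ u₀) ≤ dist x (γ 0) := isMinOn_iff.1 hu₀min 0 ⟨le_rfl, h0R⟩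
      rw [dist_comm (γ 0) x] at h2
      linarith
  have h1 : dist x (γ u₀) ≤ Metric.infDist x (γ '' Set.Ici 0) := by
    by_contra hlt
    push_neg at hlt
    obtain ⟨y, ⟨u, hu, rfl⟩, hy⟩ := (Metric.infDist_lt_iff hAne).1 hlt
    exact absurd (hglob u (Set.mem_Ici.1 hu)) (not_le.2 hy)
  exact le_antisymm h1 (Metric.infDist_le_dist_of_mem ⟨u₀, Set.mem_Ici.2 hu₀mem.1, rfl⟩)

/-- If `α` is an `N`-Morse geodesic ray and `β` a geodesic ray with
`β(∞) = α(∞)` (finite Hausdorff distance), then there are `a ∈ ℝ` and an isometry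
`ρ : [a,∞) → [0,∞)` with `α ∼_{δ_N} β ∘ ρ`. -/
theorem exists_reparam_fellow_travel (X : Type u) [MetricSpace X]
    (hgeo : IsGeodesicSpace X) (N : MorseGauge) (α β : ℝ → X)
    (hα : IsGeodesicRay 0 α) (hαM : IsMorseSet N (α '' Set.Ici 0))
    (hβ : IsGeodesicRay 0 β)
    (hasymp : FinHausdorff (α '' Set.Ici 0) (β '' Set.Ici 0)) :
    ∃ (a : ℝ) (ρ : ℝ → ℝ),
      (∀ s ∈ Set.Ici a, ∀ t ∈ Set.Ici a, |ρ s - ρ t| = |s - t|) ∧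
      (∀ t ∈ Set.Ici a, ρ t ∈ Set.Ici (0:ℝ)) ∧
      FellowTravel (deltaGauge N) α (β ∘ ρ) := by
  classical
  obtain ⟨C, hC1, -⟩ := hasymp
  set A := α '' Set.Ici 0 with hAdef
  set B := β '' Set.Ici 0 with hBdef
  set F := N.1 5 0 with hFdef
  have hF0 : (0:ℝ) ≤ F := by rw [hFdef]; exact N.2 5 0 (by norm_num) le_rfl
  set C' := max C 0 with hC'def
  have hC'0 : (0:ℝ) ≤ C' := le_max_right _ _
  have hCC' : C ≤ C' := le_max_left _ _
  have hαd : ∀ u v : ℝ, 0 ≤ u → 0 ≤ v → dist (α u) (α v) = |u - v| :=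
    fun u v hu hv => hα u (Set.mem_Ici.2 hu) v (Set.mem_Ici.2 hv)
  have hβd : ∀ u v : ℝ, 0 ≤ u → 0 ≤ v → dist (β u) (β v) = |u - v| :=
    fun u v hu hv => hβ u (Set.mem_Ici.2 hu) v (Set.mem_Ici.2 hv)
  have hC1' : ∀ s : ℝ, 0 ≤ s → Metric.infDist (α s) B ≤ C' := by
    intro s hs
    obtain ⟨b, hbB, hb⟩ := hC1 (α s) ⟨s, Set.mem_Ici.2 hs, rfl⟩
    exact le_trans (Metric.infDist_le_dist_of_mem hbB) (le_trans hb hCC')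
  obtain ⟨σ1, hσ1, hσ1d⟩ := ray_nearest' hβ (α 0)
  -- constants in the Morse gauge
  have hE : (0:ℝ) ≤ N.1 1 (2 * F) := N.2 1 (2 * F) le_rfl (by linarith)
  have hG : (0:ℝ) ≤ N.1 3 0 := N.2 3 0 (by norm_num) le_rfl
  have hdelta3F : 3 * F ≤ deltaGauge N := by
    have hm := le_max_left (4 * N.1 1 (2 * N.1 5 0) + 2 * N.1 5 0) (8 * N.1 3 0)
    unfold deltaGauge
    rw [← hFdef] at hm ⊢
    linarith
  have hδ0 : (0:ℝ) ≤ deltaGauge N := by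
    have hm := le_max_right (4 * N.1 1 (2 * N.1 5 0) + 2 * N.1 5 0) (8 * N.1 3 0)
    unfold deltaGauge
    rw [← hFdef] at hm ⊢
    linarith
  -- KEY STEP : every β s, s ≥ σ1, is within F = N(5,0) of the image of α
  have key : ∀ s, σ1 ≤ s → Metric.infDist (β s) A ≤ F := by
    intro s hs
    have hs0 : (0:ℝ) ≤ s := le_trans hσ1 hs
    set s2 : ℝ := s + σ1 + dist (α 0) (β 0) + C' + (3/2) * (dist (α 0) (β σ1) + C') + 1
      with hs2def
    have hd1nn : (0:ℝ) ≤ dist (α 0) (β 0) := dist_nonneg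
    have hd2nn : (0:ℝ) ≤ dist (α 0) (β σ1) := dist_nonneg
    have hs20 : (0:ℝ) ≤ s2 := by rw [hs2def]; linarith
    obtain ⟨σ2, hσ2, hσ2d⟩ := ray_nearest' hβ (α s2)
    obtain ⟨g1, hg1, hg1a, hg1b⟩ := hgeo (α 0) (β σ1)
    obtain ⟨g2, hg2, hg2a, hg2b⟩ := hgeo (β σ2) (α s2)
    set ℓ1 := dist (α 0) (β σ1) with hl1
    set ℓ2 := dist (β σ2) (α s2) with hl2
    have hℓ10 : (0:ℝ) ≤ ℓ1 := hd2nn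
    have hℓ20 : (0:ℝ) ≤ ℓ2 := by rw [hl2]; exact dist_nonneg
    have hℓ2inf : ℓ2 = Metric.infDist (α s2) B := by rw [hl2, dist_comm]; exact hσ2d
    have hℓ2C : ℓ2 ≤ C' := by rw [hℓ2inf]; exact hC1' s2 hs20
    -- lower bound on σ2
    have hσ2lb : s2 - dist (α 0) (β 0) - ℓ2 ≤ σ2 := by
      have e1 : dist (β 0) (β σ2) = σ2 := by
        rw [hβd 0 σ2 le_rfl hσ2, zero_sub, abs_neg, abs_of_nonneg hσ2]
      have e2 : dist (α 0) (α s2) = s2 := by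
        rw [hαd 0 s2 le_rfl hs20, zero_sub, abs_neg, abs_of_nonneg hs20]
      have t1 := dist_triangle (β 0) (β σ2) (α s2)
      have t2 := dist_triangle (α 0) (β 0) (α s2)
      rw [e1, ← hl2] at t1
      rw [e2] at t2
      rw [dist_comm (α 0) (β 0)] at t2
      rw [dist_comm (β 0) (α 0)] at t2
      linarith
    set m := σ2 - σ1 with hmdef
    have hm1 : (3/2) * (ℓ1 + ℓ2) + 1 ≤ m := by rw [hmdef]; rw [hs2def] at hσ2lb; linarith
    have hm0 : (0:ℝ) ≤ m := by linarith
    have hsσ2 : s ≤ σ2 := by rw [hs2def] at hσ2lb; linarith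
    set L := ℓ1 + m + ℓ2 with hLdef
    have h0L : (0:ℝ) ≤ L := by rw [hLdef]; linarith
    obtain ⟨ψ, hψ⟩ : ∃ ψ : ℝ → X, ψ = fun u =>
        if u < ℓ1 then g1 u else if u ≤ ℓ1 + m then β (σ1 + (u - ℓ1)) else g2 (u - (ℓ1 + m)) :=
      ⟨_, rfl⟩
    -- evaluation lemmas
    have hev1 : ∀ u, 0 ≤ u → u ≤ ℓ1 → ψ u = g1 u := by
      intro u hu hule
      rcases lt_or_eq_of_le hule with h | h
      · simp only [hψ]; rw [if_pos h]
      · subst h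
        simp only [hψ]
        rw [if_neg (lt_irrefl _), if_pos (by linarith), hg1b]
        norm_num
    have hev2 : ∀ u, ℓ1 ≤ u → u ≤ ℓ1 + m → ψ u = β (σ1 + (u - ℓ1)) := by
      intro u h1 h2
      simp only [hψ]
      rw [if_neg (not_lt.2 h1), if_pos h2]
    have hev3 : ∀ u, ℓ1 + m ≤ u → ψ u = g2 (u - (ℓ1 + m)) := by
      intro u h1
      rcases eq_or_lt_of_le h1 with h | h
      · subst h
        simp only [hψ]
        rw [if_neg (not_lt.2 (by linarith)), if_pos le_rfl,
          show σ1 + (ℓ1 + m - ℓ1) = σ2 from by rw [hmdef]; ring, sub_self, hg2a]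
      · simp only [hψ]
        rw [if_neg (not_lt.2 (by linarith)), if_neg (not_le.2 h)]
    -- junction distance computations
    have j1 : ∀ u, 0 ≤ u → u ≤ ℓ1 → dist (ψ u) (β σ1) = ℓ1 - u := by
      intro u h1 h2
      rw [hev1 u h1 h2, ← hg1b, hg1 u ⟨h1, h2⟩ ℓ1 ⟨hℓ10, le_rfl⟩,
        abs_of_nonpos (by linarith)]
      ring
    have jm1 : ∀ v, ℓ1 ≤ v → v ≤ ℓ1 + m → dist (β σ1) (ψ v) = v - ℓ1 := by
      intro v h1 h2
      rw [hev2 v h1 h2, hβd σ1 (σ1 + (v - ℓ1)) hσ1 (by linarith),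
        show σ1 - (σ1 + (v - ℓ1)) = -(v - ℓ1) from by ring, abs_neg,
        abs_of_nonneg (by linarith)]
    have jm2 : ∀ v, ℓ1 ≤ v → v ≤ ℓ1 + m → dist (ψ v) (β σ2) = (ℓ1 + m) - v := by
      intro v h1 h2
      rw [hev2 v h1 h2, hβd (σ1 + (v - ℓ1)) σ2 (by linarith) hσ2,
        show σ1 + (v - ℓ1) - σ2 = -((ℓ1 + m) - v) from by rw [hmdef]; ring, abs_neg,
        abs_of_nonneg (by linarith)]
    have j2 : ∀ w, ℓ1 + m ≤ w → w ≤ L → dist (ψ w) (β σ2) = w - (ℓ1 + m) := by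
      intro w h1 h2
      rw [hLdef] at h2
      rw [hev3 w h1, ← hg2a, hg2 (w - (ℓ1 + m)) ⟨by linarith, by linarith⟩ 0 ⟨le_rfl, hℓ20⟩,
        sub_zero, abs_of_nonneg (by linarith)]
    have hmidd : ∀ u v, ℓ1 ≤ u → u ≤ ℓ1 + m → ℓ1 ≤ v → v ≤ ℓ1 + m →
        dist (ψ u) (ψ v) = |u - v| := by
      intro u v h1 h2 h3 h4
      rw [hev2 u h1 h2, hev2 v h3 h4, hβd (σ1 + (u - ℓ1)) (σ1 + (v - ℓ1)) (by linarith)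
        (by linarith)]
      congr 1; ring
    -- projection inequalities
    have hP1 : ∀ w ∈ B, ∀ u, 0 ≤ u → u ≤ ℓ1 → ℓ1 - u ≤ dist (ψ u) w := by
      intro w hw u hu hul
      have h1 : dist (α 0) (ψ u) = u := by
        rw [hev1 u hu hul, ← hg1a, hg1 0 ⟨le_rfl, hℓ10⟩ u ⟨hu, hul⟩, zero_sub, abs_neg,
          abs_of_nonneg hu]
      have h2 : ℓ1 ≤ dist (α 0) w := by
        rw [hσ1d]; exact Metric.infDist_le_dist_of_mem hw
      have h3 := dist_triangle (α 0) (ψ u) w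
      linarith
    have hP2 : ∀ w ∈ B, ∀ v, ℓ1 + m ≤ v → v ≤ L → v - (ℓ1 + m) ≤ dist (ψ v) w := by
      intro w hw v h1 h2
      have hLv : v - (ℓ1 + m) ≤ ℓ2 := by rw [hLdef] at h2; linarith
      have hα2 : dist (α s2) (ψ v) = L - v := by
        rw [hev3 v h1, ← hg2b, hg2 ℓ2 ⟨hℓ20, le_rfl⟩ (v - (ℓ1 + m)) ⟨by linarith, hLv⟩,
          abs_of_nonneg (by linarith), hLdef]
        ring
      have h3 : ℓ2 ≤ dist (α s2) w := by
        rw [hℓ2inf]; exact Metric.infDist_le_dist_of_mem hw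
      have h4 := dist_triangle (α s2) (ψ v) w
      linarith
    -- the (5,0) quasi-geodesic property
    have hQGhalf : ∀ u v, 0 ≤ u → u ≤ v → v ≤ L →
        (1/5) * (v - u) ≤ dist (ψ u) (ψ v) ∧ dist (ψ u) (ψ v) ≤ v - u := by
      intro u v hu huv hvL
      have hv0 : (0:ℝ) ≤ v := le_trans hu huv
      have hLval : L = ℓ1 + m + ℓ2 := hLdef
      rcases le_or_gt v ℓ1 with hc1 | hc1
      · have hd : dist (ψ u) (ψ v) = v - u := by
          rw [hev1 u hu (le_trans huv hc1), hev1 v hv0 hc1,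
            hg1 u ⟨hu, le_trans huv hc1⟩ v ⟨hv0, hc1⟩, abs_of_nonpos (by linarith)]
          ring
        rw [hd]; constructor <;> linarith
      rcases le_or_gt (ℓ1 + m) u with hc2 | hc2
      · have hd : dist (ψ u) (ψ v) = v - u := by
          rw [hev3 u hc2, hev3 v (le_trans hc2 huv),
            hg2 (u - (ℓ1 + m)) ⟨by linarith, by linarith⟩ (v - (ℓ1 + m))
              ⟨by linarith, by linarith⟩, abs_of_nonpos (by linarith)]
          ring
        rw [hd]; constructor <;> linarith
      rcases le_or_gt u ℓ1 with hc3 | hc3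
      · rcases le_or_gt v (ℓ1 + m) with hc4 | hc4
        · -- u on first segment, v on middle
          have e2 := hev2 v (le_of_lt hc1) hc4
          have hj := j1 u hu hc3
          have hm1' := jm1 v (le_of_lt hc1) hc4
          have hP := hP1 (β (σ1 + (v - ℓ1))) ⟨σ1 + (v - ℓ1), Set.mem_Ici.2 (by linarith), rfl⟩
            u hu hc3
          rw [← e2] at hP
          have ht1 := dist_triangle (β σ1) (ψ u) (ψ v)
          rw [dist_comm (β σ1) (ψ u), hj, hm1'] at ht1
          have ht2 := dist_triangle (ψ u) (β σ1) (ψ v)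
          rw [hj, hm1'] at ht2
          constructor
          · linarith
          · linarith
        · -- u on first segment, v on last segment
          have hj1 := j1 u hu hc3
          have hj2 := j2 v (le_of_lt hc4) hvL
          have hσσ : dist (β σ1) (β σ2) = m := by
            rw [hβd σ1 σ2 hσ1 hσ2, abs_of_nonpos (by linarith), hmdef]
            ring
          have ta := dist_triangle (β σ1) (ψ u) (β σ2)
          have tb := dist_triangle (ψ u) (ψ v) (β σ2)
          rw [hσσ, dist_comm (β σ1) (ψ u), hj1] at ta
          rw [hj2] at tb
          have tc := dist_triangle (ψ u) (β σ1) (ψ v)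
          have td := dist_triangle (β σ1) (β σ2) (ψ v)
          rw [hj1] at tc
          rw [hσσ, dist_comm (β σ2) (ψ v), hj2] at td
          constructor
          · linarith
          · linarith
      · rcases le_or_gt v (ℓ1 + m) with hc4 | hc4
        · -- both on middle
          have hd : dist (ψ u) (ψ v) = v - u := by
            rw [hmidd u v (le_of_lt hc3) (le_of_lt hc2) (by linarith) hc4,
              abs_of_nonpos (by linarith)]
            ring
          rw [hd]; constructor <;> linarith
        · -- u on middle, v on last segment
          have hjm2 := jm2 u (le_of_lt hc3) (le_of_lt hc2)
          have hj2' := j2 v (le_of_lt hc4) hvL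
          have hP := hP2 (β (σ1 + (u - ℓ1))) ⟨σ1 + (u - ℓ1), Set.mem_Ici.2 (by linarith), rfl⟩
            v (le_of_lt hc4) hvL
          rw [← hev2 u (le_of_lt hc3) (le_of_lt hc2), dist_comm (ψ v) (ψ u)] at hP
          have ta := dist_triangle (ψ u) (ψ v) (β σ2)
          rw [hjm2, hj2'] at ta
          have tb := dist_triangle (ψ u) (β σ2) (ψ v)
          rw [hjm2, dist_comm (β σ2) (ψ v), hj2'] at tb
          constructor
          · linarith
          · linarith
    have hQG : IsQuasiGeodesicOn 5 0 ψ 0 L := by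
      intro u hu v hv
      rcases le_total u v with h | h
      · obtain ⟨h1, h2⟩ := hQGhalf u v hu.1 h hv.2
        have habs : |u - v| = v - u := by rw [abs_of_nonpos (by linarith)]; ring
        rw [habs]
        constructor
        · linarith
        · linarith
      · obtain ⟨h1, h2⟩ := hQGhalf v u hv.1 h hu.2
        have habs : |u - v| = u - v := abs_of_nonneg (by linarith)
        rw [habs, dist_comm]
        constructor
        · linarith
        · linarith
    have hstart : ψ 0 ∈ A := by
      rw [hev1 0 le_rfl hℓ10, hg1a]; exact ⟨0, Set.mem_Ici.2 le_rfl, rfl⟩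
    have hend : ψ L ∈ A := by
      rw [hev3 L (by rw [hLdef]; linarith), show L - (ℓ1 + m) = ℓ2 from by rw [hLdef]; ring,
        hg2b]
      exact ⟨s2, Set.mem_Ici.2 hs20, rfl⟩
    obtain ⟨p, hpA, hdp⟩ := hαM 5 0 (by norm_num) le_rfl ψ 0 L h0L hQG hstart hend
      (ℓ1 + (s - σ1)) ⟨by linarith, by rw [hLdef]; linarith⟩
    have heval : ψ (ℓ1 + (s - σ1)) = β s := by
      rw [hev2 (ℓ1 + (s - σ1)) (by linarith) (by linarith)]
      congr 1; ring
    rw [heval] at hdp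
    exact le_trans (Metric.infDist_le_dist_of_mem hpA) hdp
  -- nearest-point projections of β to α
  have Hnp : ∀ s : ℝ, ∃ u, 0 ≤ u ∧ dist (β s) (α u) = Metric.infDist (β s) A :=
    fun s => ray_nearest' hα (β s)
  choose uu huu0 huud using Hnp
  have huuF : ∀ s, σ1 ≤ s → dist (β s) (α (uu s)) ≤ F := by
    intro s hs; rw [huud s]; exact key s hs
  have huupar : ∀ s, σ1 ≤ s → |uu s - dist (α 0) (β s)| ≤ F := by
    intro s hs
    have h1 : dist (α 0) (α (uu s)) = uu s := by
      rw [hαd 0 (uu s) le_rfl (huu0 s), zero_sub, abs_neg, abs_of_nonneg (huu0 s)]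
    have h2 := abs_dist_sub_le (α (uu s)) (β s) (α 0)
    rw [dist_comm (α (uu s)) (α 0), dist_comm (β s) (α 0), h1,
      dist_comm (α (uu s)) (β s)] at h2
    exact le_trans h2 (huuF s hs)
  -- the drift function
  obtain ⟨c, hcval⟩ : ∃ c : ℝ → ℝ, ∀ s, c s = dist (α 0) (β s) - s := ⟨_, fun _ => rfl⟩
  have hcmono : ∀ s t : ℝ, 0 ≤ s → s ≤ t → c t ≤ c s := by
    intro s t hs hst
    have h1 := dist_triangle (α 0) (β s) (β t)
    have h2 : dist (β s) (β t) = t - s := by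
      rw [hβd s t hs (le_trans hs hst), abs_of_nonpos (by linarith)]; ring
    rw [hcval, hcval]
    linarith
  have hclb : ∀ s : ℝ, 0 ≤ s → -(dist (α 0) (β 0)) ≤ c s := by
    intro s hs
    have h1 := dist_triangle (β 0) (α 0) (β s)
    have h2 : dist (β 0) (β s) = s := by
      rw [hβd 0 s le_rfl hs, zero_sub, abs_neg, abs_of_nonneg hs]
    rw [dist_comm (β 0) (α 0)] at h1
    rw [hcval]
    linarith
  have hSne : (c '' Set.Ici 0).Nonempty := ⟨c 0, 0, Set.mem_Ici.2 le_rfl, rfl⟩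
  have hSbdd : BddBelow (c '' Set.Ici 0) := by
    refine ⟨-(dist (α 0) (β 0)), ?_⟩
    rintro y ⟨s, hs, rfl⟩
    exact hclb s (Set.mem_Ici.1 hs)
  obtain ⟨cinf, hcinf⟩ : ∃ y : ℝ, y = sInf (c '' Set.Ici 0) := ⟨_, rfl⟩
  have hlow : ∀ s : ℝ, 0 ≤ s → cinf ≤ c s := by
    intro s hs
    rw [hcinf]
    exact csInf_le hSbdd ⟨s, Set.mem_Ici.2 hs, rfl⟩
  refine ⟨|cinf|, fun t => t - cinf, ?_, ?_, ?_⟩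
  · intro s _ t _
    show |(s - cinf) - (t - cinf)| = |s - t|
    congr 1; ring
  · intro t ht
    have h1 : |cinf| ≤ t := Set.mem_Ici.1 ht
    show (0:ℝ) ≤ t - cinf
    linarith [le_abs_self cinf]
  rcases eq_or_lt_of_le hF0 with hFeq | hFpos
  · -- exact case F = 0
    have hexact : ∀ s, σ1 ≤ s → β s = α (uu s) ∧ uu s = s + c s := by
      intro s hs
      have h1 : dist (β s) (α (uu s)) ≤ 0 := by
        have := huuF s hs; rw [← hFeq] at this; exact this
      have h2 : β s = α (uu s) := dist_le_zero.1 h1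
      have h3 : |uu s - dist (α 0) (β s)| ≤ 0 := by
        have := huupar s hs; rw [← hFeq] at this; exact this
      have h4 : uu s = dist (α 0) (β s) := sub_eq_zero.1 (abs_nonpos_iff.1 h3)
      refine ⟨h2, ?_⟩
      rw [h4, hcval]; ring
    have hconst : ∀ s, σ1 ≤ s → c s = cinf := by
      intro s hs
      have hs0 : (0:ℝ) ≤ s := le_trans hσ1 hs
      by_contra hne
      have hlt : cinf < c s := lt_of_le_of_ne (hlow s hs0) (Ne.symm hne)
      have hlt' : sInf (c '' Set.Ici 0) < c s := by rw [← hcinf]; exact hlt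
      obtain ⟨y, ⟨s1, hs1, rfl⟩, hy⟩ := exists_lt_of_csInf_lt hSne hlt'
      have hs10 : (0:ℝ) ≤ s1 := Set.mem_Ici.1 hs1
      have hs1gt : s < s1 := by
        by_contra hle
        push_neg at hle
        exact absurd (hcmono s1 s hs10 hle) (not_le.2 hy)
      have hV0 : (0:ℝ) ≤ c σ1 - cinf := by linarith [hlow σ1 hσ1]
      set s' := max s1 (s + (c σ1 - cinf) + 1) with hs'def
      have hs's : s + (c σ1 - cinf) + 1 ≤ s' := le_max_right _ _
      have hs'1 : s1 ≤ s' := le_max_left _ _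
      have hcs' : c s' < c s := lt_of_le_of_lt (hcmono s1 s' hs10 hs'1) hy
      have hs'σ1 : σ1 ≤ s' := by linarith
      have hs'0 : (0:ℝ) ≤ s' := le_trans hσ1 hs'σ1
      have hδbound : c s - c s' ≤ c σ1 - cinf := by
        have h1 : c s ≤ c σ1 := hcmono σ1 s hσ1 hs
        have h2 : cinf ≤ c s' := hlow s' hs'0
        linarith
      obtain ⟨hb1, hb2⟩ := hexact s hs
      obtain ⟨hb1', hb2'⟩ := hexact s' hs'σ1
      have hd1 : dist (β s) (β s') = s' - s := by
        rw [hβd s s' hs0 hs'0, abs_of_nonpos (by linarith)]; ring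
      have hd2 : dist (β s) (β s') = |uu s - uu s'| := by
        rw [hb1, hb1']; exact hαd (uu s) (uu s') (huu0 s) (huu0 s')
      have hd3 : |(s + c s) - (s' + c s')| = s' - s := by
        rw [← hb2, ← hb2', ← hd2, hd1]
      have hd4 : |(c s - c s') - (s' - s)| = s' - s := by
        rw [show (c s - c s') - (s' - s) = (s + c s) - (s' + c s') from by ring, hd3]
      rcases (abs_eq (by linarith : (0:ℝ) ≤ s' - s)).1 hd4 with hcase | hcase
      · linarith
      · linarith
    refine ⟨σ1 + |cinf|, fun t ht => ?_⟩
    have hs : σ1 ≤ t - cinf := by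
      have h1 : σ1 + |cinf| ≤ t := ht
      linarith [le_abs_self cinf]
    obtain ⟨hb1, hb2⟩ := hexact (t - cinf) hs
    show dist (α t) (β (t - cinf)) ≤ deltaGauge N
    rw [hb1, hb2, hconst (t - cinf) hs, show t - cinf + cinf = t from by ring, dist_self]
    exact hδ0
  · -- case F > 0
    obtain ⟨s₀, hs₀0, hs₀⟩ : ∃ s₀ : ℝ, 0 ≤ s₀ ∧ c s₀ < cinf + F := by
      by_contra hcon
      push_neg at hcon
      have h1 : cinf + F ≤ sInf (c '' Set.Ici 0) := by
        apply le_csInf hSne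
        rintro y ⟨s, hs, rfl⟩
        exact hcon s (Set.mem_Ici.1 hs)
      rw [← hcinf] at h1
      linarith
    refine ⟨max (max σ1 s₀) |cinf| + cinf, fun t ht => ?_⟩
    have hM1 : σ1 ≤ max (max σ1 s₀) |cinf| := le_trans (le_max_left _ _) (le_max_left _ _)
    have hM2 : s₀ ≤ max (max σ1 s₀) |cinf| := le_trans (le_max_right _ _) (le_max_left _ _)
    have hM3 : |cinf| ≤ max (max σ1 s₀) |cinf| := le_max_right _ _
    have ht' : max (max σ1 s₀) |cinf| + cinf ≤ t := ht
    have hsσ1 : σ1 ≤ t - cinf := by linarith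
    have hss₀ : s₀ ≤ t - cinf := by linarith
    have hs0' : (0:ℝ) ≤ t - cinf := le_trans hσ1 hsσ1
    have ht0 : (0:ℝ) ≤ t := by linarith [neg_abs_le cinf]
    have h1 := huuF (t - cinf) hsσ1
    have h2 := huupar (t - cinf) hsσ1
    have h3 := hlow (t - cinf) hs0'
    have h4 := hcmono s₀ (t - cinf) hs₀0 hss₀
    have h5 : dist (α t) (α (uu (t - cinf))) = |t - uu (t - cinf)| :=
      hαd t (uu (t - cinf)) ht0 (huu0 (t - cinf))
    show dist (α t) (β (t - cinf)) ≤ deltaGauge N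
    have htr := dist_triangle (α t) (α (uu (t - cinf))) (β (t - cinf))
    rw [h5] at htr
    have h6 : dist (α (uu (t - cinf))) (β (t - cinf)) ≤ F := by
      rw [dist_comm]; exact h1
    have hcs : dist (α 0) (β (t - cinf)) = (t - cinf) + c (t - cinf) := by
      rw [hcval]; ring
    rw [hcs] at h2
    have habs : |t - uu (t - cinf)| ≤ (c (t - cinf) - cinf) + F := by
      calc |t - uu (t - cinf)|
          = |(cinf - c (t - cinf)) + (((t - cinf) + c (t - cinf)) - uu (t - cinf))| := by
            congr 1; ring
        _ ≤ |cinf - c (t - cinf)| + |((t - cinf) + c (t - cinf)) - uu (t - cinf)| := abs_add_le _ _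
        _ ≤ (c (t - cinf) - cinf) + F := by
            have e2 : |cinf - c (t - cinf)| = c (t - cinf) - cinf := by
              rw [abs_of_nonpos (by linarith)]; ring
            rw [e2, abs_sub_comm ((t - cinf) + c (t - cinf)) (uu (t - cinf))]
            exact add_le_add le_rfl h2
    have hcc : c (t - cinf) - cinf < F := by linarith
    linarith [hdelta3F]
end

section
/- Let X be a geodesic metric space. Suppose α:[a,∞)→X is an N-Morse geodesic ray and β:[b,∞)→X is a geodesic ray such that β ∼_{δ_N} α and α(a) = β(b). Then β is M-Morse, where the Morse gauge M depends only on N. -/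
set_option autoImplicit false

universe u v

open Set Metric

/-- If `α` is an `N`-Morse geodesic ray and `β` a geodesic ray with
`β ∼_{δ_N} α` and `α(a) = β(b)`, then `β` is `M`-Morse where `M` depends only on `N`. -/
theorem morse_of_fellowTravel_same_start (N : MorseGauge) :
    ∃ M : MorseGauge, ∀ (X : Type u) [MetricSpace X], IsGeodesicSpace X →
      ∀ (a b : ℝ) (α β : ℝ → X), IsGeodesicRay a α → IsMorseSet N (α '' Set.Ici a) →
        IsGeodesicRay b β → FellowTravel (deltaGauge N) β α → α a = β b →
        IsMorseSet M (β '' Set.Ici b) := by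
  have hδ : 0 ≤ deltaGauge N := by
    have h1 := N.2 5 0 (by norm_num) le_rfl
    have h2 := N.2 3 0 (by norm_num) le_rfl
    have h3 : 8 * N.1 3 0 ≤ max (4 * N.1 1 (2 * N.1 5 0) + 2 * N.1 5 0) (8 * N.1 3 0) :=
      le_max_right _ _
    unfold deltaGauge
    linarith
  set D := N.1 1 (2 * deltaGauge N) with hDdef
  have hD0 : 0 ≤ D := N.2 1 _ le_rfl (by linarith)
  refine ⟨⟨fun K C => N.1 K (C + 2 * D) + 4 * D, ?_⟩, ?_⟩
  · intro K C hK hC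
    have := N.2 K (C + 2 * D) hK (by linarith)
    dsimp
    linarith
  intro X _ hX a b α β hα hMα hβ hFT hab
  obtain ⟨T, hT⟩ := hFT
  -- Claim 1 : every point of β is within D of the image of α
  have claim1 : ∀ u ≥ b, ∃ p ∈ α '' Set.Ici a, dist (β u) p ≤ D := by
    intro u hu
    set s := max (max a b) (max T u) with hs
    have hsa : a ≤ s := le_trans (le_max_left a b) (le_max_left _ _)
    have hsb : b ≤ s := le_trans (le_max_right a b) (le_max_left _ _)
    have hsT : T ≤ s := le_trans (le_max_left T u) (le_max_right _ _)
    have hsu : u ≤ s := le_trans (le_max_right T u) (le_max_right _ _)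
    obtain ⟨γ, hγ, hγ0, hγd⟩ := hX (β s) (α s)
    set d := dist (β s) (α s) with hd
    have hd0 : (0:ℝ) ≤ d := dist_nonneg
    have hdδ : d ≤ deltaGauge N := hT s hsT
    set φ := fun w : ℝ => if w ≤ s then β w else γ (w - s) with hφdef
    have hφβ : ∀ w, w ≤ s → φ w = β w := by
      intro w hw; simp [hφdef, hw]
    have hφγ : ∀ w, s ≤ w → w ≤ s + d → φ w = γ (w - s) := by
      intro w hw1 hw2
      by_cases h : w ≤ s
      · have hws : w = s := le_antisymm h hw1
        simp [hφdef, h, hws, hγ0]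
      · simp [hφdef, h]
    -- one-sided distance estimate
    have hone : ∀ x y : ℝ, b ≤ x → x ≤ y → y ≤ s + d →
        y - x - 2 * deltaGauge N ≤ dist (φ x) (φ y) ∧ dist (φ x) (φ y) ≤ y - x := by
      intro x y hx hxy hy
      by_cases hys : y ≤ s
      · have hxs : x ≤ s := le_trans hxy hys
        rw [hφβ x hxs, hφβ y hys, hβ x hx y (le_trans hx hxy)]
        rw [abs_of_nonpos (by linarith)]
        constructor <;> linarith
      · push_neg at hys
        have hyd : y - s ∈ Set.Icc (0:ℝ) d := ⟨by linarith, by linarith⟩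
        have h0d : (0:ℝ) ∈ Set.Icc (0:ℝ) d := ⟨le_rfl, hd0⟩
        have hγdist : dist (γ 0) (γ (y - s)) = y - s := by
          rw [hγ 0 h0d (y - s) hyd, abs_of_nonpos (by linarith)]; ring
        have hφy : φ y = γ (y - s) := hφγ y (le_of_lt hys) hy
        by_cases hxs : x ≤ s
        · rw [hφβ x hxs, hφy]
          have hβxs : dist (β x) (β s) = s - x := by
            rw [hβ x hx s (le_trans hx hxs), abs_of_nonpos (by linarith)]; ring
          constructor
          · have h1 : dist (β x) (β s) ≤ dist (β x) (γ (y - s)) + dist (γ (y - s)) (β s) :=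
              dist_triangle (β x) (γ (y - s)) (β s)
            have h2 : dist (γ (y - s)) (β s) = y - s := by
              rw [dist_comm, ← hγ0, hγdist]
            rw [hβxs, h2] at h1
            have : y - s ≤ deltaGauge N := le_trans (by linarith [hyd.2]) hdδ
            linarith
          · calc dist (β x) (γ (y - s)) ≤ dist (β x) (β s) + dist (β s) (γ (y - s)) :=
                  dist_triangle _ _ _
              _ = (s - x) + (y - s) := by rw [hβxs, ← hγ0, hγdist]
              _ = y - x := by ring
        · push_neg at hxs
          have hxd : x - s ∈ Set.Icc (0:ℝ) d := ⟨by linarith, by linarith⟩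
          rw [hφγ x (le_of_lt hxs) (by linarith [hyd.2]), hφy,
            hγ (x - s) hxd (y - s) hyd, abs_of_nonpos (by linarith)]
          constructor <;> linarith
    have hQG : IsQuasiGeodesicOn 1 (2 * deltaGauge N) φ b (s + d) := by
      intro x hx y hy
      rcases le_total x y with hxy | hxy
      · obtain ⟨h1, h2⟩ := hone x y hx.1 hxy hy.2
        rw [abs_of_nonpos (by linarith)]
        constructor <;> [linarith; linarith]
      · obtain ⟨h1, h2⟩ := hone y x hy.1 hxy hx.2
        rw [dist_comm, abs_of_nonneg (by linarith)]
        constructor <;> [linarith; linarith]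
    have hφb : φ b ∈ α '' Set.Ici a := by
      rw [hφβ b hsb, ← hab]
      exact ⟨a, Set.self_mem_Ici, rfl⟩
    have hφe : φ (s + d) ∈ α '' Set.Ici a := by
      have : φ (s + d) = α s := by
        rw [hφγ (s + d) (by linarith) le_rfl]
        have : s + d - s = d := by ring
        rw [this, hγd]
      rw [this]
      exact ⟨s, hsa, rfl⟩
    obtain ⟨p, hp, hpd⟩ := hMα 1 (2 * deltaGauge N) le_rfl (by linarith) φ b (s + d)
      (by linarith) hQG hφb hφe u ⟨hu, by linarith⟩
    refine ⟨p, hp, ?_⟩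
    rw [hφβ u hsu] at hpd
    exact hpd
  -- Claim 2 : every point of α is within 2D of the image of β
  have claim2 : ∀ t ≥ a, ∃ q ∈ β '' Set.Ici b, dist (α t) q ≤ 2 * D := by
    intro t ht
    have hu : b ≤ t - a + b := by linarith
    obtain ⟨p, hp, hpd⟩ := claim1 (t - a + b) hu
    obtain ⟨t', ht', hpt'⟩ := hp
    refine ⟨β (t - a + b), ⟨t - a + b, hu, rfl⟩, ?_⟩
    have hat' : a ≤ t' := Set.mem_Ici.mp ht'
    rw [← hpt'] at hpd
    rw [dist_comm] at hpd
    have hαat' : dist (α a) (α t') = t' - a := by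
      rw [hα a Set.self_mem_Ici t' ht', abs_of_nonpos (by linarith)]; ring
    have hαau : dist (α a) (β (t - a + b)) = t - a := by
      rw [hab, hβ b Set.self_mem_Ici (t - a + b) (Set.mem_Ici.mpr hu),
        abs_of_nonpos (by linarith)]
      ring
    have habs := abs_dist_sub_le (α t') (β (t - a + b)) (α a)
    rw [dist_comm (α t') (α a), dist_comm (β (t - a + b)) (α a), hαat', hαau] at habs
    have htt' : |t' - t| ≤ D := by
      rw [abs_le] at habs ⊢
      exact ⟨by linarith [habs.1], by linarith [habs.2]⟩
    have hαtt' : dist (α t) (α t') = |t - t'| := hα t (Set.mem_Ici.mpr ht) t' ht'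
    have habs2 : |t - t'| ≤ D := by rw [abs_sub_comm]; exact htt'
    calc dist (α t) (β (t - a + b))
        ≤ dist (α t) (α t') + dist (α t') (β (t - a + b)) := dist_triangle _ _ _
      _ ≤ 2 * D := by rw [hαtt']; linarith
  -- Main Morse verification
  intro K C hK hC φ s t hst hφ hφs hφt w hw
  dsimp only
  have hM0 : 0 ≤ N.1 K (C + 2 * D) := N.2 K _ hK (by linarith)
  rcases eq_or_lt_of_le hst with hst' | hst'
  · refine ⟨φ w, ?_, ?_⟩
    · have : w = s := le_antisymm (hst' ▸ hw.2) hw.1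
      rw [this]; exact hφs
    · rw [dist_self]; linarith
  · obtain ⟨u₀, hu₀, hβu₀⟩ := hφs
    obtain ⟨u₁, hu₁, hβu₁⟩ := hφt
    obtain ⟨p, hp, hpd⟩ := claim1 u₀ hu₀
    obtain ⟨q, hq, hqd⟩ := claim1 u₁ hu₁
    rw [hβu₀] at hpd
    rw [hβu₁] at hqd
    set ψ := fun x : ℝ => if x = s then p else if x = t then q else φ x with hψdef
    have hψclose : ∀ x, dist (ψ x) (φ x) ≤ D := by
      intro x
      by_cases h1 : x = s
      · subst h1; simp only [hψdef, if_pos rfl]; rw [dist_comm]; exact hpd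
      · by_cases h2 : x = t
        · subst h2; simp only [hψdef, if_neg h1, if_pos rfl]; rw [dist_comm]; exact hqd
        · simp only [hψdef, if_neg h1, if_neg h2]; rw [dist_self]; exact hD0
    have hψQG : IsQuasiGeodesicOn K (C + 2 * D) ψ s t := by
      intro x hx y hy
      obtain ⟨h1, h2⟩ := hφ x hx y hy
      have c1 := hψclose x
      have c2 := hψclose y
      have t1 : dist (ψ x) (ψ y) ≤ dist (ψ x) (φ x) + dist (φ x) (φ y) + dist (φ y) (ψ y) := by
        calc dist (ψ x) (ψ y) ≤ dist (ψ x) (φ y) + dist (φ y) (ψ y) := dist_triangle _ _ _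
          _ ≤ dist (ψ x) (φ x) + dist (φ x) (φ y) + dist (φ y) (ψ y) := by
              have := dist_triangle (ψ x) (φ x) (φ y); linarith
      have t2 : dist (φ x) (φ y) ≤ dist (φ x) (ψ x) + dist (ψ x) (ψ y) + dist (ψ y) (φ y) := by
        calc dist (φ x) (φ y) ≤ dist (φ x) (ψ y) + dist (ψ y) (φ y) := dist_triangle _ _ _
          _ ≤ dist (φ x) (ψ x) + dist (ψ x) (ψ y) + dist (ψ y) (φ y) := by
              have := dist_triangle (φ x) (ψ x) (ψ y); linarith
      rw [dist_comm (φ x) (ψ x)] at t2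
      rw [dist_comm (φ y) (ψ y)] at t1
      constructor
      · have := dist_comm (ψ y) (φ y)
        linarith [hψclose y, t2]
      · linarith
    have hψs : ψ s ∈ α '' Set.Ici a := by simp [hψdef]; exact hp
    have hψt : ψ t ∈ α '' Set.Ici a := by
      have : (t ≠ s) := ne_of_gt hst'
      simp [hψdef, this]; exact hq
    obtain ⟨r, hr, hrd⟩ := hMα K (C + 2 * D) hK (by linarith) ψ s t hst hψQG hψs hψt w hw
    obtain ⟨t'', ht'', hrt''⟩ := hr
    obtain ⟨z, hz, hzd⟩ := claim2 t'' ht''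
    refine ⟨z, hz, ?_⟩
    calc dist (φ w) z ≤ dist (φ w) (ψ w) + dist (ψ w) r + dist r z := by
          have h1 := dist_triangle (φ w) r z
          have h2 := dist_triangle (φ w) (ψ w) r
          linarith
      _ ≤ D + N.1 K (C + 2 * D) + 2 * D := by
          have := hψclose w
          rw [dist_comm (ψ w) (φ w)] at this
          have hrz : dist r z ≤ 2 * D := by rw [← hrt'']; exact hzd
          linarith
      _ ≤ N.1 K (C + 2 * D) + 4 * D := by linarith
end

section
/- Let X be a proper geodesic metric space with basepoint o, and let A ⊆ X. If x ∈ ∂X_o is a Morse conical limit point of A, then x is a Morse funnelled limit point of A. -/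
set_option autoImplicit false

universe u v

open Set Metric

section Aux

variable {X : Type u} [MetricSpace X]

/-- The image of a geodesic ray is closed. -/
lemma ray_image_closed {a : ℝ} {α : ℝ → X} (h : IsGeodesicRay a α) :
    IsClosed (α '' Set.Ici a) := by
  have hiso : Isometry (fun r : Set.Ici a => α r) := by
    apply Isometry.of_dist_eq
    intro u v
    rw [h u u.2 v v.2, Subtype.dist_eq, Real.dist_eq]
  haveI : CompleteSpace (Set.Ici a) := isClosed_Ici.completeSpace_coe
  have := hiso.isClosedEmbedding.isClosed_range
  rwa [Set.image_eq_range]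

/-- Every geodesic segment is Morse, with a gauge depending on its length. -/
lemma segment_morse (γ : ℝ → X) (L : ℝ) (hL : 0 ≤ L) (hγ : IsGeodesicOn γ 0 L) :
    IsMorseSet ⟨fun K C => K * K * (L + C) + C, by
      intro K C hK hC
      have h := mul_nonneg (mul_nonneg (le_trans zero_le_one hK) (le_trans zero_le_one hK))
        (add_nonneg hL hC)
      dsimp only; linarith⟩ (γ '' Set.Icc 0 L) := by
  intro K C hK hC φ s t hst hφ hφs hφt u hu
  refine ⟨φ s, hφs, ?_⟩
  have hK0 : (0:ℝ) < K := lt_of_lt_of_le one_pos hK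
  have h1 := (hφ u hu s ⟨le_refl s, hst⟩).2
  have h2 := (hφ s ⟨le_refl s, hst⟩ t ⟨hst, le_refl t⟩).1
  have hdist : dist (φ s) (φ t) ≤ L := by
    obtain ⟨u₁, hu₁, e₁⟩ := hφs
    obtain ⟨u₂, hu₂, e₂⟩ := hφt
    rw [← e₁, ← e₂, hγ u₁ hu₁ u₂ hu₂]
    rw [abs_le]
    constructor <;> [linarith [hu₁.1, hu₁.2, hu₂.1, hu₂.2]; linarith [hu₁.1, hu₁.2, hu₂.1, hu₂.2]]
  have hst' : |s - t| ≤ K * (L + C) := by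
    have h3 : (1 / K) * |s - t| ≤ L + C := by linarith
    have h4 := mul_le_mul_of_nonneg_left h3 hK0.le
    calc |s - t| = K * ((1 / K) * |s - t|) := by field_simp
    _ ≤ K * (L + C) := h4
  have hus : |u - s| ≤ |s - t| := by
    rw [abs_of_nonneg (by linarith [hu.1] : (0:ℝ) ≤ u - s),
      abs_of_nonpos (by linarith : s - t ≤ 0)]
    linarith [hu.2]
  show dist (φ u) (φ s) ≤ K * K * (L + C) + C
  nlinarith [abs_nonneg (u - s)]

lemma finHausdorff_trans {S T U : Set X} (h1 : FinHausdorff S T) (h2 : FinHausdorff T U) :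
    FinHausdorff S U := by
  obtain ⟨C₁, h1a, h1b⟩ := h1
  obtain ⟨C₂, h2a, h2b⟩ := h2
  refine ⟨C₁ + C₂, fun s hs => ?_, fun u hu => ?_⟩
  · obtain ⟨t, ht, hd⟩ := h1a s hs
    obtain ⟨v, hv, hd'⟩ := h2a t ht
    exact ⟨v, hv, le_trans (dist_triangle s t v) (by linarith)⟩
  · obtain ⟨t, ht, hd⟩ := h2b u hu
    obtain ⟨s, hs, hd'⟩ := h1b t ht
    exact ⟨s, hs, le_trans (dist_triangle s t u) (by linarith)⟩

end Aux

/-- In a proper geodesic metric space, every Morse conical limit point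
of `A ⊆ X` is a Morse funnelled limit point of `A`. -/
theorem conical_implies_funnelled (X : Type u) [MetricSpace X] [ProperSpace X]
    (hgeo : IsGeodesicSpace X) (o : X) (A : Set X) (x : MorseBoundary o)
    (hx : IsMorseConicalLimitPoint o A x) :
    IsMorseFunnelLimitPoint o A x := by
  obtain ⟨K₀, hK₀, hx'⟩ := hx
  intro a α hray hM hconv
  obtain ⟨M, hMorse⟩ := hM
  set a' : ℝ := a + 3 * K₀ with ha'
  have haa' : a ≤ a' := by simp only [ha']; linarith
  -- the tail ray
  have hray' : IsGeodesicRay a' α := fun u hu v hv =>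
    hray u (le_trans haa' hu) v (le_trans haa' hv)
  have hsub : α '' Set.Ici a' ⊆ α '' Set.Ici a :=
    Set.image_mono (Set.Ici_subset_Ici.mpr haa')
  -- every point of the full ray is within 3K₀ of the tail
  have hclose : ∀ p ∈ α '' Set.Ici a, ∃ q ∈ α '' Set.Ici a', dist p q ≤ 3 * K₀ := by
    rintro p ⟨r, hr, rfl⟩
    by_cases hra : a' ≤ r
    · exact ⟨α r, ⟨r, hra, rfl⟩, by simp; linarith⟩
    · have har : a ≤ r := hr
      refine ⟨α a', ⟨a', le_refl a', rfl⟩, ?_⟩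
      rw [hray r hr a' haa']
      rw [abs_of_nonpos (by simp only [ha'] at hra ⊢; linarith : r - a' ≤ 0)]
      simp only [ha']
      linarith
  -- the tail is Morse
  have hMorse' : ∃ M' : MorseGauge, IsMorseSet M' (α '' Set.Ici a') := by
    refine ⟨⟨fun K C => M.1 K C + 3 * K₀, fun K C hK hC => by
      have := M.2 K C hK hC; dsimp only; linarith⟩, ?_⟩
    intro K C hK hC φ s t hst hφ hφs hφt u hu
    obtain ⟨p, hp, hpd⟩ := hMorse K C hK hC φ s t hst hφ (hsub hφs) (hsub hφt) u hu
    obtain ⟨q, hq, hqd⟩ := hclose p hp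
    exact ⟨q, hq, le_trans (dist_triangle (φ u) p q) (by dsimp only; linarith)⟩
  -- the tail converges to x
  have hconv' : RayConvergesTo o a' α x := by
    obtain ⟨N, β, hβ, hHaus⟩ := hconv
    refine ⟨N, β, hβ, finHausdorff_trans ⟨3 * K₀, ?_, ?_⟩ hHaus⟩
    · intro s hs
      exact ⟨s, hsub hs, by simp; linarith⟩
    · intro p hp
      obtain ⟨q, hq, hqd⟩ := hclose p hp
      exact ⟨q, hq, by rwa [dist_comm]⟩
  obtain ⟨y, hyA, hy⟩ := hx' a' α hray' hMorse' hconv'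
  -- set up notation
  set S : Set X := α '' Set.Ici a with hS
  set S' : Set X := α '' Set.Ici a' with hS'
  have hS'ne : S'.Nonempty := ⟨α a', a', le_refl a', rfl⟩
  have hSne : S.Nonempty := ⟨α a', hsub ⟨a', le_refl a', rfl⟩⟩
  set D : ℝ := Metric.infDist y S with hD
  have hDK : D ≤ K₀ := le_trans (Metric.infDist_le_infDist_of_subset hsub hS'ne) hy
  -- every nearest point of y on S is far from α a
  have hkey : ∀ q ∈ nearestPoints S y, D ≤ dist (α a) q := by
    rintro q ⟨⟨r, hr, rfl⟩, hqd⟩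
    have hfar : 2 * K₀ - D ≤ dist (α a) (α r) := by
      apply le_of_forall_pos_le_add
      intro ε hε
      have : Metric.infDist y S' < K₀ + ε := lt_of_le_of_lt hy (by linarith)
      obtain ⟨p, ⟨t', ht', rfl⟩, hpd⟩ := (Metric.infDist_lt_iff hS'ne).mp this
      have h1 : dist (α r) (α t') ≤ D + (K₀ + ε) := by
        calc dist (α r) (α t') ≤ dist (α r) y + dist y (α t') := dist_triangle _ _ _
        _ ≤ D + (K₀ + ε) := by
            rw [dist_comm (α r) y]
            exact add_le_add hqd.le hpd.le
      rw [hray r hr t' (le_trans haa' ht')] at h1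
      rw [hray a (le_refl a) r hr]
      have h2 : t' - r ≤ D + (K₀ + ε) := le_trans (le_abs_self _) (by rwa [abs_sub_comm])
      have h3 : a + 3 * K₀ ≤ t' := ht'
      have h4 : a - r ≤ -(2 * K₀ - D - ε) := by linarith
      calc 2 * K₀ - D ≤ (2 * K₀ - D - ε) + ε := by linarith
      _ ≤ |a - r| + ε := by
          have : 2 * K₀ - D - ε ≤ |a - r| := le_trans (by linarith) (neg_le_abs (a - r))
          linarith
    calc D ≤ 2 * K₀ - D := by linarith
    _ ≤ dist (α a) (α r) := hfar
  -- nearest points exist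
  have hSclosed : IsClosed S := ray_image_closed hray
  obtain ⟨q₀, hq₀S, hq₀d⟩ := hSclosed.exists_infDist_eq_dist hSne y
  have hq₀ : q₀ ∈ nearestPoints S y := ⟨hq₀S, hq₀d.symm⟩
  have hnear : D ≤ Metric.infDist (α a) (nearestPoints S y) := by
    by_contra h
    push_neg at h
    obtain ⟨q, hq, hqd⟩ := (Metric.infDist_lt_iff ⟨q₀, hq₀⟩).mp h
    exact absurd hqd (not_lt.mpr (hkey q hq))
  -- y is in a Morse stratum
  have hstrat : ∃ N : MorseGauge, InMorseStratum o N y := by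
    obtain ⟨γ, hγ, hγ0, hγ1⟩ := hgeo o y
    exact ⟨_, γ, hγ, hγ0, hγ1, segment_morse γ (dist o y) dist_nonneg hγ⟩
  obtain ⟨N, hN⟩ := hstrat
  exact ⟨N, y, ⟨⟨hN, le_trans (le_of_eq rfl) hnear⟩, hyA⟩⟩
end
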